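/- arXiv:2407.07500 — 9 statements merged into one kernel-verified Lean document; each statement's English description precedes it below -/
import Mathlib

section
/- Let k ≥ 2 be an integer, let G be a finite simple graph on a vertex set V, and let u, v be non-adjacent vertices of G that are clear non-neighbors with respect to k. Then for every simple graph G' on V with S_k(G') = S_k(G), the pair uv is not an edge of G'. -/
/-- `connSets k G` is the family of `k`-element subsets of the vertex set that
induce a connected subgraph of `G` (denoted `S_k(G)` in the paper). -/
def connSets {V : Type*} (k : ℕ) (G : SimpleGraph V) : Set (Finset V) :=
  {S | S.card = k ∧ (G.induce (S : Set V)).Connected}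

/-- One direction of the "clear non-neighbors" condition: there is a connected
`k`-set `S` with `v ∈ S`, `u ∉ S`, such that for every `v' ∈ S \ {v}` the set
`(S \ {v'}) ∪ {u}` induces a disconnected subgraph of `G`. -/
def OneSideClear {V : Type*} [DecidableEq V] (k : ℕ) (G : SimpleGraph V) (u v : V) : Prop :=
  ∃ S : Finset V, S.card = k ∧ (G.induce (S : Set V)).Connected ∧ v ∈ S ∧ u ∉ S ∧
    ∀ v' ∈ S.erase v,
      ¬ (G.induce ((insert u (S.erase v') : Finset V) : Set V)).Connected

/-- Two (non-adjacent) vertices `u`, `v` are clear non-neighbors with respect to `k`. -/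
def ClearNonNeighbors {V : Type*} [DecidableEq V] (k : ℕ) (G : SimpleGraph V) (u v : V) : Prop :=
  OneSideClear k G u v ∨ OneSideClear k G v u

/-!
Suppose `G'` had the edge `uv`, and let `S` witness that `u`, `v` are clear non-neighbors, say
`v ∈ S`, `u ∉ S`. Then `S` is connected in `G'` too, hence so is `T = S ∪ {u}`, a connected
graph on `k + 1 ≥ 3` vertices containing the edge `uv`. Such a graph has a non-cut vertex
`w ∉ {u, v}`: take `w` farthest from `u` among the vertices other than `u` and `v`. So
`T \ {w} = (S \ {w}) ∪ {u}` lies in `S_k(G') = S_k(G)`, contradicting the choice of `S`.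
-/

namespace SimpleGraph

variable {V : Type*} {G : SimpleGraph V}

lemma Connected.exists_adj_dist_add_one (hG : G.Connected) {u x : V} (hne : u ≠ x) :
    ∃ y, G.Adj x y ∧ G.dist u y + 1 = G.dist u x := by
  obtain ⟨p, hp⟩ := hG.exists_walk_length_eq_dist x u
  have hnil : ¬p.Nil := fun h => hne (h.eq).symm
  refine ⟨p.snd, p.adj_snd hnil, ?_⟩
  have htail := p.length_tail_add_one hnil
  have hle := dist_le p.tail
  have htri : G.dist x u ≤ G.dist x p.snd + G.dist p.snd u := hG.dist_triangle
  rw [dist_eq_one_iff_adj.mpr (p.adj_snd hnil)] at htri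
  rw [dist_comm (u := u), dist_comm (u := u)]
  omega

lemma Connected.induce_compl_singleton_of_forall_dist_le (hG : G.Connected) {u w : V}
    (hwu : w ≠ u) (hfar : ∀ x, ¬G.Adj u x → G.dist u x ≤ G.dist u w) :
    (G.induce {w}ᶜ).Connected := by
  have reach : ∀ n, ∀ x (hx : x ∈ ({w}ᶜ : Set V)), G.dist u x = n →
      (G.induce {w}ᶜ).Reachable ⟨u, hwu.symm⟩ ⟨x, hx⟩ := by
    intro n
    induction n using Nat.strong_induction_on with
    | _ n ih =>
      intro x hx hdist
      by_cases hxu : u = x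
      · subst hxu; rfl
      by_cases hadj : G.Adj u x
      · exact Adj.reachable (by simpa using hadj)
      obtain ⟨y, hxy, hy⟩ := hG.exists_adj_dist_add_one hxu
      have hyw : y ≠ w := by
        rintro rfl
        have := hfar x hadj
        omega
      exact (ih _ (by omega) y hyw rfl).trans (Adj.reachable (by simpa using hxy.symm))
  exact (connected_iff_exists_forall_reachable _).2
    ⟨⟨u, hwu.symm⟩, fun x => reach _ x.1 x.2 rfl⟩

lemma Connected.exists_induce_compl_singleton_connected [Finite V] (hG : G.Connected) {u v x : V}
    (huv : G.Adj u v) (hxu : x ≠ u) (hxv : x ≠ v) :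
    ∃ w, w ≠ u ∧ w ≠ v ∧ (G.induce {w}ᶜ).Connected := by
  obtain ⟨w, ⟨hwu, hwv⟩, hmax⟩ := Set.exists_max_image {y | y ≠ u ∧ y ≠ v} (G.dist u)
    (Set.toFinite _) ⟨x, hxu, hxv⟩
  refine ⟨w, hwu, hwv, hG.induce_compl_singleton_of_forall_dist_le hwu fun y hy => ?_⟩
  by_cases hyu : y = u
  · simp [hyu]
  exact hmax y ⟨hyu, by rintro rfl; exact hy huv⟩

lemma connected_induce_diff_singleton_of_induce_compl {s : Set V} {w : s}
    (h : ((G.induce s).induce {w}ᶜ).Connected) : (G.induce (s \ {w.1})).Connected := by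
  let e := ((Embedding.induce {w}ᶜ).trans (Embedding.induce s) : (G.induce s).induce {w}ᶜ ↪g G)
  have hrange : Set.range e = s \ {w.1} := by
    ext x
    constructor
    · rintro ⟨⟨⟨y, hy⟩, hyw⟩, rfl⟩
      exact ⟨hy, fun h => hyw (Subtype.ext h)⟩
    · rintro ⟨hx, hxw⟩
      exact ⟨⟨⟨x, hx⟩, fun h => hxw (congrArg Subtype.val h)⟩, rfl⟩
  rw [← hrange]
  exact (Embedding.isoInduceRange e).connected_iff.mp h

lemma Connected.induce_insert_of_adj {s : Set V} (hs : (G.induce s).Connected) {u v : V}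
    (hv : v ∈ s) (huv : G.Adj u v) : (G.induce (insert u s)).Connected := by
  have hset : insert u s = s ∪ {v, u} := by
    ext x
    simp only [Set.mem_insert_iff, Set.mem_union, Set.mem_singleton_iff]
    grind
  rw [hset]
  exact connected_induce_union hs.preconnected (induce_pair_connected_of_adj huv.symm).preconnected
    hv (Set.mem_insert_of_mem v rfl) huv.symm

lemma Connected.exists_connected_induce_diff_singleton {s : Set V} [Finite s]
    (hs : (G.induce s).Connected) {u v x : V} (hu : u ∈ s) (hv : v ∈ s) (hx : x ∈ s)
    (huv : G.Adj u v) (hxu : x ≠ u) (hxv : x ≠ v) :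
    ∃ w ∈ s, w ≠ u ∧ w ≠ v ∧ (G.induce (s \ {w})).Connected := by
  obtain ⟨w, hwu, hwv, hw⟩ := hs.exists_induce_compl_singleton_connected
    (u := ⟨u, hu⟩) (v := ⟨v, hv⟩) (x := ⟨x, hx⟩) huv
    (fun h => hxu (congrArg Subtype.val h)) (fun h => hxv (congrArg Subtype.val h))
  exact ⟨w, w.2, fun h => hwu (Subtype.ext h), fun h => hwv (Subtype.ext h),
    connected_induce_diff_singleton_of_induce_compl hw⟩

end SimpleGraph

open SimpleGraph

lemma OneSideClear.not_adj_of_connSets_eq {V : Type*} [DecidableEq V] {k : ℕ} (hk : 2 ≤ k)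
    {G G' : SimpleGraph V} {u v : V} (h : OneSideClear k G u v)
    (hSk : connSets k G' = connSets k G) : ¬G'.Adj u v := by
  intro hadj
  obtain ⟨S, hcard, hconn, hvS, huS, hsplit⟩ := h
  have hS' : (G'.induce S).Connected := (hSk ▸ ⟨hcard, hconn⟩ : S ∈ connSets k G').2
  have hT : (G'.induce (insert u (S : Set V))).Connected := hS'.induce_insert_of_adj hvS hadj
  obtain ⟨x, hxS, hxv⟩ := S.exists_mem_ne (by omega) v
  obtain ⟨w, hwT, hwu, hwv, hw⟩ := hT.exists_connected_induce_diff_singleton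
    (Set.mem_insert u _) (Set.mem_insert_of_mem u hvS) (Set.mem_insert_of_mem u hxS)
    hadj (fun h => huS (h ▸ hxS)) hxv
  have hwS : w ∈ S := hwT.resolve_left hwu
  have hcard' : (insert u (S.erase w)).card = k := by
    rw [Finset.card_insert_of_notMem (fun h => huS (Finset.mem_of_mem_erase h)),
      Finset.card_erase_of_mem hwS]
    omega
  have hset : ((insert u (S.erase w) : Finset V) : Set V) = insert u (S : Set V) \ {w} := by
    ext y
    simp only [Finset.coe_insert, Finset.coe_erase, Set.mem_insert_iff, Set.mem_sdiff,
      Set.mem_singleton_iff, Finset.mem_coe]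
    grind
  have hmem : insert u (S.erase w) ∈ connSets k G' := ⟨hcard', hset ▸ hw⟩
  rw [hSk] at hmem
  exact hsplit w (Finset.mem_erase.mpr ⟨hwv, hwS⟩) hmem.2

theorem stmt1_general {V : Type*} [DecidableEq V] (k : ℕ) (hk : 2 ≤ k)
    (G : SimpleGraph V) (u v : V)
    (hclear : ClearNonNeighbors k G u v)
    (G' : SimpleGraph V) (hSk : connSets k G' = connSets k G) :
    ¬ G'.Adj u v := by
  rcases hclear with h | h
  · exact h.not_adj_of_connSets_eq hk hSk
  · exact fun hadj => h.not_adj_of_connSets_eq hk hSk hadj.symm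

theorem stmt1 {V : Type*} [Fintype V] [DecidableEq V] (k : ℕ) (hk : 2 ≤ k)
    (G : SimpleGraph V) (u v : V) (hnadj : ¬ G.Adj u v)
    (hclear : ClearNonNeighbors k G u v)
    (G' : SimpleGraph V) (hSk : connSets k G' = connSets k G) :
    ¬ G'.Adj u v :=
  stmt1_general k hk G u v hclear G' hSk
end

section
/- Let k ≥ 2 be an integer and let G be a finite simple graph on a vertex set V. Let u, v be non-adjacent vertices of G that are fake neighbors with respect to k. Let C_u be the connected component containing u of the subgraph of G induced on V \ N_G(v), and let C_v be the connected component containing v of the subgraph of G induced on V \ N_G(u). If |V(C_u) ∪ V(C_v)| ≤ k − 1, then the graph G + uv obtained from G by adding the edge uv satisfies S_k(G + uv) = S_k(G); in particular, G is not the unique graph with its family of connected k-sets. -/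
/-- The vertex set of the connected component containing `u` of the subgraph of `G`
induced on the set `A` (empty if `u ∉ A`). -/
def compSet {V : Type*} (G : SimpleGraph V) (A : Set V) (u : V) : Set V :=
  {x | ∃ (hu : u ∈ A) (hx : x ∈ A), (G.induce A).Reachable ⟨u, hu⟩ ⟨x, hx⟩}

/-!
Adding the edge `uv` can only change the connectivity of `G[S]` when `u, v ∈ S`. If `G[S]` is
disconnected while `(G + uv)[S]` is connected, then `u` does not reach `v` in `G[S]` and every
vertex of `S` is reached from `u` or from `v`. The part reached from `u` then contains no
neighbour of `v`, so it lies in `C_u`; likewise the part reached from `v` lies in `C_v`. Hence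
`k = |S| ≤ |C_u ∪ C_v| ≤ k - 1`, which is absurd.
-/

open SimpleGraph

namespace SimpleGraph

variable {W : Type*} {H : SimpleGraph W} {a b : W}

theorem Reachable.or_of_sup_edge {x : W} (h : (H ⊔ edge a b).Reachable a x) :
    H.Reachable a x ∨ H.Reachable b x := by
  obtain ⟨p⟩ := h
  suffices ∀ {y z : W}, (H ⊔ edge a b).Walk y z →
      H.Reachable a y ∨ H.Reachable b y → H.Reachable a z ∨ H.Reachable b z from
    this p (Or.inl .rfl)
  intro y z p
  induction p with
  | nil => exact id
  | @cons y y' z hadj _ ih =>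
    refine fun hy ↦ ih ?_
    rcases hadj with hadj | hadj
    · exact hy.imp (·.trans hadj.reachable) (·.trans hadj.reachable)
    · obtain ⟨⟨rfl, rfl⟩ | ⟨rfl, rfl⟩, -⟩ := (edge_adj ..).1 hadj
      · exact Or.inr .rfl
      · exact Or.inl .rfl

theorem Connected.of_sup_edge (h : (H ⊔ edge a b).Connected) (hab : H.Reachable a b) :
    H.Connected := by
  have hfrom_a (x : W) : H.Reachable a x :=
    ((h.preconnected a x).or_of_sup_edge).elim id hab.trans
  have := h.nonempty
  exact .mk fun x y ↦ (hfrom_a x).symm.trans (hfrom_a y)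

variable {V : Type*} {G : SimpleGraph V} {S : Set V} {u v : V}

theorem induce_sup_edge (hu : u ∈ S) (hv : v ∈ S) :
    (G ⊔ edge u v).induce S = G.induce S ⊔ edge ⟨u, hu⟩ ⟨v, hv⟩ := by
  ext x y
  simp [edge_adj, Subtype.ext_iff]

theorem induce_sup_edge_of_not_both_mem (h : ¬(u ∈ S ∧ v ∈ S)) :
    (G ⊔ edge u v).induce S = G.induce S := by
  ext x y
  simp only [comap_adj, Function.Embedding.subtype_apply, sup_adj, edge_adj, or_iff_left_iff_imp]
  rintro ⟨⟨hx, hy⟩ | ⟨hx, hy⟩, -⟩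
  · exact absurd ⟨hx ▸ x.2, hy ▸ y.2⟩ h
  · exact absurd ⟨hy ▸ y.2, hx ▸ x.2⟩ h

end SimpleGraph

section CompSet

variable {V : Type*} {G : SimpleGraph V} {S : Set V} {u v : V}

theorem mem_compSet_of_induce_reachable {B : Set V} {x : V} (hu : u ∈ S) (hx : x ∈ S)
    (h : (G.induce S).Reachable ⟨u, hu⟩ ⟨x, hx⟩)
    (hB : ∀ y (hy : y ∈ S), (G.induce S).Reachable ⟨u, hu⟩ ⟨y, hy⟩ → y ∈ B) :
    x ∈ compSet G B u := by
  obtain ⟨p⟩ := h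
  have hsupp : ∀ y ∈ (p.map (Embedding.induce S).toHom).support, y ∈ B := by
    simp only [Walk.support_map, List.mem_map]
    rintro _ ⟨y, hy, rfl⟩
    classical exact hB y y.2 ⟨p.takeUntil y hy⟩
  exact ⟨_, _, ⟨(p.map (Embedding.induce S).toHom).induce B hsupp⟩⟩

theorem mem_compSet_of_not_reachable {x : V} (hu : u ∈ S) (hv : v ∈ S) (hx : x ∈ S)
    (hux : (G.induce S).Reachable ⟨u, hu⟩ ⟨x, hx⟩)
    (huv : ¬(G.induce S).Reachable ⟨u, hu⟩ ⟨v, hv⟩) :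
    x ∈ compSet G {y | y ∉ G.neighborSet v} u :=
  mem_compSet_of_induce_reachable hu hx hux fun y hy huy hyv ↦
    huv (huy.trans (show (G.induce S).Adj ⟨y, hy⟩ ⟨v, hv⟩ from hyv.symm).reachable)

theorem subset_compSet_union_of_sup_edge (hu : u ∈ S) (hv : v ∈ S)
    (hconn : ((G ⊔ edge u v).induce S).Connected) (hdisc : ¬(G.induce S).Connected) :
    S ⊆ compSet G {y | y ∉ G.neighborSet v} u ∪ compSet G {y | y ∉ G.neighborSet u} v := by
  rw [induce_sup_edge hu hv] at hconn
  have huv : ¬(G.induce S).Reachable ⟨u, hu⟩ ⟨v, hv⟩ := fun h ↦ hdisc (hconn.of_sup_edge h)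
  intro x hx
  rcases (hconn.preconnected _ ⟨x, hx⟩).or_of_sup_edge with hux | hvx
  · exact .inl (mem_compSet_of_not_reachable hu hv hx hux huv)
  · exact .inr (mem_compSet_of_not_reachable hv hu hx hvx (huv ·.symm))

end CompSet

theorem stmt4_general {V : Type*} [Fintype V] (k : ℕ)
    (G : SimpleGraph V) (u v : V) (huv : u ≠ v) (hnadj : ¬ G.Adj u v)
    (hsmall : (compSet G {x | x ∉ G.neighborSet v} u ∪
               compSet G {x | x ∉ G.neighborSet u} v).ncard ≤ k - 1) :
    connSets k (G ⊔ SimpleGraph.fromEdgeSet {s(u, v)}) = connSets k G ∧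
    G ⊔ SimpleGraph.fromEdgeSet {s(u, v)} ≠ G := by
  change connSets k (G ⊔ edge u v) = connSets k G ∧ G ⊔ edge u v ≠ G
  refine ⟨?_, (G.lt_sup_edge u v huv hnadj).ne'⟩
  ext S
  refine ⟨fun ⟨hcard, hconn⟩ ↦ ⟨hcard, ?_⟩, fun ⟨hcard, hconn⟩ ↦ ⟨hcard, ?_⟩⟩
  · by_cases huvS : u ∈ S ∧ v ∈ S
    · by_contra hdisc
      have hsub := subset_compSet_union_of_sup_edge huvS.1 huvS.2 hconn hdisc
      have hle := Set.ncard_le_ncard hsub (Set.toFinite _)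
      rw [Set.ncard_coe_finset, hcard] at hle
      have hpos := Finset.card_pos.2 ⟨u, huvS.1⟩
      omega
    · rwa [induce_sup_edge_of_not_both_mem huvS] at hconn
  · exact hconn.mono fun _ _ ↦ Or.inl

theorem stmt4 {V : Type*} [Fintype V] [DecidableEq V] (k : ℕ) (hk : 2 ≤ k)
    (G : SimpleGraph V) (u v : V) (huv : u ≠ v) (hnadj : ¬ G.Adj u v)
    (hfake : ¬ ClearNonNeighbors k G u v)
    (hsmall : (compSet G {x | x ∉ G.neighborSet v} u ∪
               compSet G {x | x ∉ G.neighborSet u} v).ncard ≤ k - 1) :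
    connSets k (G ⊔ SimpleGraph.fromEdgeSet {s(u, v)}) = connSets k G ∧
    G ⊔ SimpleGraph.fromEdgeSet {s(u, v)} ≠ G :=
  stmt4_general k G u v huv hnadj hsmall
end

section
/- Let k ≥ 3 and r ≥ 3k − 6 be integers. Let K be the star K_{1,r} on a vertex set V: a graph with a center vertex v adjacent to all r other vertices of V and with no other edges. If G is a triangle-free simple graph on V with S_k(G) = S_k(K), then G = K. -/
open Finset

namespace SimpleGraph

variable {V : Type*} {G : SimpleGraph V}

lemma induce_connected_of_forall_adj {s : Set V} {c : V} (hc : c ∈ s)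
    (h : ∀ x ∈ s, x ≠ c → G.Adj c x) : (G.induce s).Connected := by
  rw [connected_iff_exists_forall_reachable]
  refine ⟨⟨c, hc⟩, fun ⟨x, hx⟩ => ?_⟩
  by_cases hxc : x = c
  · subst hxc; rfl
  · exact Adj.reachable (h x hx hxc)

lemma exists_adj_of_induce_connected {s : Set V} (hs : (G.induce s).Connected) {x y : V}
    (hx : x ∈ s) (hy : y ∈ s) (hxy : x ≠ y) : ∃ z ∈ s, G.Adj x z := by
  have : Nontrivial s := ⟨⟨⟨x, hx⟩, ⟨y, hy⟩, by simpa using hxy⟩⟩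
  obtain ⟨z, hz⟩ := hs.preconnected.exists_adj_of_nontrivial ⟨x, hx⟩
  exact ⟨z, z.2, hz⟩

lemma induce_connected_iff_center_mem {K : SimpleGraph V} {v : V}
    (hK : ∀ x y, K.Adj x y ↔ ((x = v ∧ y ≠ v) ∨ (y = v ∧ x ≠ v))) {S : Finset V}
    (hS : 1 < #S) : (K.induce (S : Set V)).Connected ↔ v ∈ S := by
  refine ⟨fun hconn => ?_, fun hv => induce_connected_of_forall_adj hv fun x _ hxv =>
    (hK v x).mpr (Or.inl ⟨rfl, hxv⟩)⟩
  by_contra hv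
  obtain ⟨a, ha, b, hb, hab⟩ := one_lt_card.mp hS
  obtain ⟨z, hz, hadj⟩ := exists_adj_of_induce_connected hconn ha hb hab
  rcases (hK a z).mp hadj with ⟨rfl, -⟩ | ⟨rfl, -⟩
  · exact hv ha
  · exact hv hz

section ConnectedIffMem

variable [Fintype V] [DecidableEq V] [DecidableRel G.Adj] {k : ℕ} {v : V}
  (hG : ∀ S : Finset V, #S = k → ((G.induce (S : Set V)).Connected ↔ v ∈ S))
include hG

lemma card_compl_neighborFinset_lt (hk : 2 ≤ k) : #(G.neighborFinset v)ᶜ < k := by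
  by_contra! hle
  obtain ⟨T, hvT, hTN, hT⟩ := exists_subsuperset_card_eq
    (singleton_subset_iff.mpr (mem_compl.mpr (G.notMem_neighborFinset_self v)))
    (by simp; omega) hle
  have hvT := singleton_subset_iff.mp hvT
  obtain ⟨y, hy, hyv⟩ := exists_mem_ne (by omega : 1 < #T) v
  obtain ⟨z, hz, hadj⟩ :=
    exists_adj_of_induce_connected ((hG T hT).mpr hvT) hvT hy hyv.symm
  exact mem_compl.mp (hTN hz) ((G.mem_neighborFinset v z).mpr hadj)

lemma card_insert_neighborFinset_lt {u : V} (huv : u ≠ v) (hadj : ¬ G.Adj u v) (hk : 0 < k) :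
    #(insert u (G.neighborFinset u)) < k := by
  by_contra! hle
  obtain ⟨T, huT, hTN, hT⟩ := exists_subsuperset_card_eq
    (singleton_subset_iff.mpr (mem_insert_self u (G.neighborFinset u))) (by simp; omega) hle
  have hconn : (G.induce (T : Set V)).Connected :=
    induce_connected_of_forall_adj (singleton_subset_iff.mp huT) fun x hx hxu => by
      simpa [hxu] using hTN hx
  rcases mem_insert.mp (hTN ((hG T hT).mp hconn)) with rfl | hv
  · exact huv rfl
  · exact hadj ((G.mem_neighborFinset u v).mp hv)

lemma card_sdiff_neighborFinset_add_two_lt {u : V} (huv : u ≠ v) (hadj : ¬ G.Adj u v)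
    (hk : 2 ≤ k) : #(G.neighborFinset v \ G.neighborFinset u) + 2 < k := by
  set D := G.neighborFinset v \ G.neighborFinset u
  have huD : u ∉ D := by simp [D, G.adj_comm v u, hadj]
  have hvD : v ∉ D := by simp [D]
  by_contra! hle
  obtain ⟨T, huvT, hTD, hT⟩ := exists_subsuperset_card_eq (n := k)
    (insert_subset_insert u (singleton_subset_iff.mpr (mem_insert_self v D)))
    (by rw [card_pair huv]; exact hk)
    (by rw [card_insert_of_notMem (by simp [huv, huD]), card_insert_of_notMem hvD]; omega)
  have hu : u ∈ T := huvT (mem_insert_self u {v})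
  have hv : v ∈ T := huvT (by simp)
  obtain ⟨z, hz, hz'⟩ := exists_adj_of_induce_connected ((hG T hT).mpr hv) hu hv huv
  rcases mem_insert.mp (hTD hz) with rfl | hz
  · exact G.loopless.irrefl _ hz'
  rcases mem_insert.mp hz with rfl | hz
  · exact hadj hz'
  · exact (mem_sdiff.mp hz).2 ((G.mem_neighborFinset u z).mpr hz')

theorem adj_of_connected_iff_mem (hk : 3 ≤ k) (hV : 3 * k - 6 < Fintype.card V) {u : V}
    (huv : u ≠ v) : G.Adj v u := by
  by_contra hvu
  have hadj : ¬ G.Adj u v := fun h => hvu h.symm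
  have h₁ := card_compl_neighborFinset_lt hG (by omega)
  have h₂ := card_insert_neighborFinset_lt hG huv hadj (by omega)
  have h₃ := card_sdiff_neighborFinset_add_two_lt hG huv hadj (by omega)
  have h₄ : #(G.neighborFinset v) ≤ #(G.neighborFinset v \ G.neighborFinset u) +
      #(G.neighborFinset u) := card_le_card_sdiff_add_card
  have h₅ := card_insert_of_notMem (G.notMem_neighborFinset_self u)
  have h₆ := card_add_card_compl (G.neighborFinset v)
  omega

end ConnectedIffMem

lemma eq_of_cliqueFree_three_of_forall_adj {K : SimpleGraph V} {v : V}
    (hK : ∀ x y, K.Adj x y ↔ ((x = v ∧ y ≠ v) ∨ (y = v ∧ x ≠ v))) (hfree : G.CliqueFree 3)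
    (hv : ∀ u ≠ v, G.Adj v u) : G = K := by
  classical
  ext x y
  rw [hK x y]
  constructor
  · intro hxy
    by_cases hx : x = v
    · exact Or.inl ⟨hx, hx ▸ hxy.ne'⟩
    by_cases hy : y = v
    · exact Or.inr ⟨hy, hx⟩
    exact (hfree {v, x, y} (is3Clique_triple_iff.mpr ⟨hv x hx, hv y hy, hxy⟩)).elim
  · rintro (⟨rfl, hy⟩ | ⟨rfl, hx⟩)
    · exact hv y hy
    · exact (hv x hx).symm

end SimpleGraph

open SimpleGraph in
theorem stmt5_general {V : Type*} [Fintype V] (k r : ℕ) (hk : 3 ≤ k)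
    (hr : 3 * k - 6 ≤ r) (hcard : Fintype.card V = r + 1) (v : V)
    (K : SimpleGraph V)
    (hK : ∀ x y, K.Adj x y ↔ ((x = v ∧ y ≠ v) ∨ (y = v ∧ x ≠ v)))
    (G : SimpleGraph V) (hfree : G.CliqueFree 3)
    (hSk : connSets k G = connSets k K) :
    G = K := by
  classical
  have hG : ∀ S : Finset V, #S = k → ((G.induce (S : Set V)).Connected ↔ v ∈ S) := by
    intro S hS
    have hmem : S ∈ connSets k G ↔ S ∈ connSets k K := by rw [hSk]
    simp only [connSets, Set.mem_ofPred_eq, hS, true_and] at hmem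
    rw [hmem, induce_connected_iff_center_mem hK (by omega)]
  exact eq_of_cliqueFree_three_of_forall_adj hK hfree fun u huv =>
    adj_of_connected_iff_mem hG hk (by omega) huv

theorem stmt5 {V : Type*} [Fintype V] [DecidableEq V] (k r : ℕ) (hk : 3 ≤ k)
    (hr : 3 * k - 6 ≤ r) (hcard : Fintype.card V = r + 1) (v : V)
    (K : SimpleGraph V)
    (hK : ∀ x y, K.Adj x y ↔ ((x = v ∧ y ≠ v) ∨ (y = v ∧ x ≠ v)))
    (G : SimpleGraph V) (hfree : G.CliqueFree 3)
    (hSk : connSets k G = connSets k K) :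
    G = K :=
  stmt5_general k r hk hr hcard v K hK G hfree hSk
end

section
/- Let S be a finite set with at least two elements, and let E and E_N be disjoint sets of unordered pairs of distinct elements of S. Let u, v ∈ S be distinct with {u,v} ∉ E ∪ E_N. Then the following are equivalent: (a) for every simple graph G on S with E ⊆ E(G) and E(G) ∩ E_N = ∅, the graph G with the edge uv added is connected if and only if the graph G with the edge uv removed is connected; (b) either u and v are joined by a path all of whose edges lie in E, or the graph on S whose edge set consists of all pairs of distinct elements of S not belonging to E_N is disconnected. -/
/-!
If `u` and `v` are joined by known edges, then in every supergraph `uv` lies on a cycle or is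
absent, so it is never a bridge; if the graph of all allowed pairs is disconnected, no supergraph
is connected, with or without `uv`. Conversely, if neither holds, take a supergraph `G` that is
maximal among those in which `u` and `v` are not connected. Adding any further allowed edge to `G`
would connect `u` and `v`, so every vertex lies in the component of `u` or of `v`; hence
`G + uv` is connected while `G - uv = G` is not.
-/

namespace SimpleGraph

variable {V : Type*} {G L M : SimpleGraph V} {u v x y a b : V}

theorem Reachable.mem_of_adj_closed {s : Set V} (hs : ∀ a b, G.Adj a b → a ∈ s → b ∈ s)
    (h : G.Reachable x y) (hx : x ∈ s) : y ∈ s := by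
  by_contra hy
  obtain ⟨p⟩ := h
  obtain ⟨d, -, hd, hd'⟩ := p.exists_boundary_dart s hx hy
  exact hd' (hs _ _ d.adj hd)

theorem reachable_sup_edge (G : SimpleGraph V) (a b : V) : (G ⊔ edge a b).Reachable a b := by
  rcases eq_or_ne a b with rfl | hne
  · exact .rfl
  · exact Adj.reachable (.inr ((edge_adj ..).mpr ⟨.inl ⟨rfl, rfl⟩, hne⟩))

theorem reachable_sup_edge_iff :
    (G ⊔ edge a b).Reachable x y ↔ G.Reachable x y ∨
      (G.Reachable x a ∧ G.Reachable b y) ∨ (G.Reachable x b ∧ G.Reachable a y) := by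
  constructor
  · rintro ⟨p⟩
    induction p with
    | nil => exact .inl .rfl
    | cons h _ ih =>
      rcases h with h | h
      · have := h.reachable
        grind [Reachable.trans]
      · rw [edge_adj] at h
        grind [Reachable.refl]
  · have hab := reachable_sup_edge G a b
    rintro (h | ⟨h, h'⟩ | ⟨h, h'⟩)
    · exact h.mono le_sup_left
    · exact (h.mono le_sup_left).trans (hab.trans (h'.mono le_sup_left))
    · exact (h.mono le_sup_left).trans (hab.symm.trans (h'.mono le_sup_left))

theorem connected_sup_edge_iff_of_reachable_deleteEdges
    (h : (G.deleteEdges {s(u, v)}).Reachable u v) :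
    (G ⊔ edge u v).Connected ↔ (G.deleteEdges {s(u, v)}).Connected := by
  refine ⟨fun hc => ?_, fun hc => hc.mono ((deleteEdges_le _).trans le_sup_left)⟩
  simpa using hc.connected_delete_edge_of_not_isBridge (x := u) (y := v)
    (by rwa [isBridge_sup_edge, isBridge_iff, not_not])

theorem exists_le_le_connected_sup_edge_of_not_reachable [Finite V] (hLM : L ≤ M)
    (hM : M.Connected) (hL : ¬L.Reachable u v) :
    ∃ G, L ≤ G ∧ G ≤ M ∧ ¬G.Reachable u v ∧ (G ⊔ edge u v).Connected := by
  obtain ⟨G, hLG, hmax⟩ := Finite.exists_le_maximal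
    (p := fun G => L ≤ G ∧ G ≤ M ∧ ¬G.Reachable u v) ⟨le_rfl, hLM, hL⟩
  obtain ⟨-, hGM, hGuv⟩ := hmax.prop
  have hclosed : ∀ c d, M.Adj c d → (G.Reachable u c ∨ G.Reachable v c) →
      G.Reachable u d ∨ G.Reachable v d := by
    -- by maximality, an edge of `M` missing from `G` would join `u` to `v`
    intro c d hcd hc
    by_cases hG : G.Adj c d
    · exact hc.imp (·.trans hG.reachable) (·.trans hG.reachable)
    have : (G ⊔ edge c d).Reachable u v := by
      by_contra h
      exact hmax.not_prop_of_gt (G.lt_sup_edge c d hcd.ne hG)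
        ⟨hLG.trans le_sup_left, sup_le hGM (M.edge_le_iff.mpr (.inr hcd)), h⟩
    rcases reachable_sup_edge_iff.mp this with h | ⟨-, h⟩ | ⟨h, -⟩
    exacts [absurd h hGuv, .inr h.symm, .inl h]
  refine ⟨G, hLG, hGM, hGuv, (connected_iff_exists_forall_reachable _).mpr ⟨u, fun x => ?_⟩⟩
  rcases (hM.preconnected u x).mem_of_adj_closed hclosed (.inl .rfl) with h | h
  · exact h.mono le_sup_left
  · exact (reachable_sup_edge G u v).trans (h.mono le_sup_left)

end SimpleGraph

open SimpleGraph

theorem stmt7_general {V : Type*} [Fintype V]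
    (E EN : Set (Sym2 V))
    (hE : ∀ e ∈ E, ¬ e.IsDiag)
    (hdisj : Disjoint E EN)
    (u v : V) (hunk : s(u, v) ∉ E ∪ EN) :
    (∀ G : SimpleGraph V, E ⊆ G.edgeSet → Disjoint G.edgeSet EN →
        ((G ⊔ SimpleGraph.fromEdgeSet {s(u, v)}).Connected ↔
          (G.deleteEdges {s(u, v)}).Connected))
      ↔
    ((SimpleGraph.fromEdgeSet E).Reachable u v ∨
      ¬ (SimpleGraph.fromEdgeSet ENᶜ).Connected) := by
  rw [Set.mem_union, not_or] at hunk
  have hlower (G : SimpleGraph V) : E ⊆ G.edgeSet ↔ fromEdgeSet E ≤ G :=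
    ⟨fun h => G.fromEdgeSet_le.mpr (Set.sdiff_subset.trans h),
      fun h e he => G.fromEdgeSet_le.mp h ⟨he, hE e he⟩⟩
  have hupper (G : SimpleGraph V) : Disjoint G.edgeSet EN ↔ G ≤ fromEdgeSet ENᶜ := by
    rw [G.le_fromEdgeSet_iff, Set.subset_compl_iff_disjoint_right]
  constructor
  · intro h
    by_contra! ⟨hL, hM⟩
    obtain ⟨G, hLG, hGM, hGuv, hconn⟩ := exists_le_le_connected_sup_edge_of_not_reachable
      (fromEdgeSet_mono (Set.subset_compl_iff_disjoint_right.mpr hdisj)) hM hL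
    exact hGuv (((h G ((hlower G).mpr hLG) ((hupper G).mpr hGM)).mp hconn).mono
      (deleteEdges_le _) |>.preconnected u v)
  · rintro (hL | hM) G hEG hGEN
    · refine connected_sup_edge_iff_of_reachable_deleteEdges (hL.mono ((hlower _).mp ?_))
      rw [edgeSet_deleteEdges]
      exact fun e he => ⟨hEG he, fun h => hunk.1 (Set.mem_singleton_iff.mp h ▸ he)⟩
    · have hGM := (hupper G).mp hGEN
      have huvM : edge u v ≤ fromEdgeSet ENᶜ :=
        ((edge u v).le_fromEdgeSet_iff _).mpr
          (edgeSet_edge_subset.trans (Set.singleton_subset_iff.mpr hunk.2))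
      exact iff_of_false (fun h => hM (h.mono (sup_le hGM huvM)))
        (fun h => hM (h.mono ((deleteEdges_le _).trans hGM)))

theorem stmt7 {V : Type*} [Fintype V] [Nontrivial V]
    (E EN : Set (Sym2 V))
    (hE : ∀ e ∈ E, ¬ e.IsDiag) (hEN : ∀ e ∈ EN, ¬ e.IsDiag)
    (hdisj : Disjoint E EN)
    (u v : V) (huv : u ≠ v) (hunk : s(u, v) ∉ E ∪ EN) :
    (∀ G : SimpleGraph V, E ⊆ G.edgeSet → Disjoint G.edgeSet EN →
        ((G ⊔ SimpleGraph.fromEdgeSet {s(u, v)}).Connected ↔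
          (G.deleteEdges {s(u, v)}).Connected))
      ↔
    ((SimpleGraph.fromEdgeSet E).Reachable u v ∨
      ¬ (SimpleGraph.fromEdgeSet ENᶜ).Connected) :=
  stmt7_general E EN hE hdisj u v hunk
end

section
/- Let k ≥ 2 be an integer. Let G₁ and G₂ be triangle-free simple graphs on the same finite vertex set V with S_k(G₁) = S_k(G₂), let u ∈ V, and let Z ⊆ V be a set of 2k − 4 vertices with Z ⊆ N_{G₁}(u) ∩ N_{G₂}(u). Then N_{G₁}(u) = N_{G₂}(u); moreover, writing X = N_{G₁}(u) and Y = N_{G₁}({u} ∪ X) (the open neighborhood of {u} ∪ X in G₁), one has N_{G₂}({u} ∪ X) = Y, every pair {s,t} with s ∈ {u} ∪ X and t ∈ V is an edge of G₁ if and only if it is an edge of G₂, and every pair {s,t} with s, t ∈ Y is an edge of G₁ if and only if it is an edge of G₂. -/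
/-- The open neighborhood of a set `T` of vertices in a graph `G`:
`N_G(T) = (⋃_{t ∈ T} N_G(t)) \ T`. -/
def setNbhd {V : Type*} (G : SimpleGraph V) (T : Set V) : Set V :=
  {x | x ∉ T ∧ ∃ t ∈ T, G.Adj t x}

/-!
Common neighbours of `u` are pairwise non-adjacent in both (triangle-free) graphs. Fix a vertex `t`
outside `Z` and a `G₁`-edge ending at `t` that is missing from `G₂`. Since `|Z| = 2k - 4`, either
`k - 2` vertices of `Z` are `G₂`-non-neighbours of `t`, or `k - 1` are `G₂`-neighbours. In the first
case a short `G₁`-path from `u` to `t`, padded with such non-neighbours hanging off `u`, is a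
connected `k`-set of `G₁` in which `t` is isolated in `G₂`. In the second case the `G₂`-star at `t`
is a connected `k`-set, so it is connected in `G₁`; as its leaves are independent in `G₁`, they are
all `G₁`-neighbours of `t`, and a `G₁`-star at `t` through the missing edge yields a triangle.
Running this along paths `u t`, `u s t` and `u a s t` recovers the edges at `u`, at `N(u)` and
inside the second neighbourhood. For `k = 2`, `S₂(G)` is just the edge set.
-/

open Finset

namespace SimpleGraph

variable {V : Type*} {G G₁ G₂ : SimpleGraph V}

lemma CliqueFree.not_adj_of_adj_of_adj (hG : G.CliqueFree 3) {u a b : V}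
    (ha : G.Adj u a) (hb : G.Adj u b) : ¬G.Adj a b := fun hab =>
  G.isIndepSet_neighborSet_of_triangleFree hG u ha hb hab.ne hab

lemma exists_adj_of_induce_connected_s9 {S : Set V} (hS : (G.induce S).Connected) {a b : V}
    (ha : a ∈ S) (hb : b ∈ S) (hab : a ≠ b) : ∃ c ∈ S, G.Adj a c := by
  have : Nontrivial S := ⟨⟨a, ha⟩, ⟨b, hb⟩, Subtype.coe_ne_coe.mp hab⟩
  obtain ⟨c, hac⟩ := hS.preconnected.exists_adj_of_nontrivial ⟨a, ha⟩
  exact ⟨c, c.2, hac⟩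

lemma induce_connected_insert {S : Set V} (hS : (G.induce S).Connected) {v w : V}
    (hv : v ∈ S) (hvw : G.Adj v w) : (G.induce (insert w S)).Connected := by
  rw [Set.insert_eq, Set.union_comm]
  exact connected_induce_union hS.preconnected (by simp) hv rfl hvw

lemma setNbhd_congr {T : Set V} (h : ∀ a ∈ T, ∀ b, G₁.Adj a b ↔ G₂.Adj a b) :
    setNbhd G₁ T = setNbhd G₂ T := by
  ext x
  exact and_congr_right fun _ => exists_congr fun a => and_congr_right fun ha => h a ha x

lemma exists_adj_of_mem_connSets {k : ℕ} {S : Finset V} (hS : S ∈ connSets k G) (hk : 2 ≤ k)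
    {t : V} (ht : t ∈ S) : ∃ x ∈ S, G.Adj t x := by
  obtain ⟨b, hb, hbt⟩ := exists_mem_ne (by rw [hS.1]; omega : 1 < #S) t
  exact exists_adj_of_induce_connected_s9 hS.2 ht hb hbt.symm

variable [DecidableEq V] {k : ℕ}

lemma induce_connected_union_of_forall_adj {P C : Finset V} (hP : (G.induce (P : Set V)).Connected)
    {r : V} (hr : r ∈ P) (hC : ∀ c ∈ C, G.Adj r c) :
    (G.induce ((P ∪ C : Finset V) : Set V)).Connected := by
  induction C using Finset.induction_on with
  | empty => rwa [union_empty]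
  | insert c C _ ih =>
    rw [union_insert, coe_insert]
    exact induce_connected_insert (ih fun x hx => hC x (mem_insert_of_mem hx))
      (mem_coe.2 (mem_union_left C hr)) (hC c (mem_insert_self c C))

lemma pair_mem_connSets_two_iff {s t : V} (hst : s ≠ t) :
    {s, t} ∈ connSets 2 G ↔ G.Adj s t := by
  refine ⟨fun h => ?_, fun h => ⟨card_pair hst, ?_⟩⟩
  · obtain ⟨x, hx, hsx⟩ := exists_adj_of_mem_connSets h le_rfl (mem_insert_self s {t})
    rcases mem_insert.1 hx with rfl | hx
    · exact absurd hsx (G.irrefl)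
    · rwa [mem_singleton.1 hx] at hsx
  · rw [coe_pair]
    exact induce_pair_connected_of_adj h

lemma eq_of_connSets_two_eq (h : connSets 2 G₁ = connSets 2 G₂) : G₁ = G₂ := by
  ext s t
  rcases eq_or_ne s t with rfl | hst
  · simp
  · rw [← pair_mem_connSets_two_iff hst, h, pair_mem_connSets_two_iff hst]

lemma exists_mem_connSets_between {P C : Finset V} (hP : (G.induce (P : Set V)).Connected)
    {r : V} (hr : r ∈ P) (hC : ∀ c ∈ C, G.Adj r c) (hPk : #P ≤ k) (hkPC : k ≤ #(P ∪ C)) :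
    ∃ S ∈ connSets k G, P ⊆ S ∧ S ⊆ P ∪ C := by
  obtain ⟨W, hW, hWcard⟩ := exists_subset_card_eq (s := C \ P) (n := k - #P)
    (by have := card_sdiff_add_card C P; rw [union_comm] at this; omega)
  refine ⟨P ∪ W, ⟨?_, ?_⟩, subset_union_left, union_subset_union_right (hW.trans sdiff_subset)⟩
  · rw [card_union_of_disjoint (disjoint_of_subset_right hW disjoint_sdiff)]
    omega
  · exact induce_connected_union_of_forall_adj hP hr fun c hc => hC c (sdiff_subset (hW hc))

lemma card_add_two_le_card_union {P C : Finset V} {a b : V} (hab : a ≠ b) (ha : a ∈ P)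
    (hb : b ∈ P) (haC : a ∉ C) (hbC : b ∉ C) : #C + 2 ≤ #(P ∪ C) :=
  calc #C + 2 = #(insert a (insert b C)) := by
        rw [card_insert_of_notMem (by simp [hab, haC]), card_insert_of_notMem hbC]
    _ ≤ #(P ∪ C) := card_le_card <| insert_subset (mem_union_left C ha) <|
        insert_subset (mem_union_left C hb) subset_union_right

lemma exists_adj_of_connSets_eq (hSk : connSets k G₁ = connSets k G₂) {P C : Finset V}
    (hP : (G₁.induce (P : Set V)).Connected) {r t : V} (hr : r ∈ P) (ht : t ∈ P) (hrt : r ≠ t)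
    (hC : ∀ c ∈ C, G₁.Adj r c) (htC : t ∉ C) (hPk : #P ≤ k) (hkC : k ≤ #C + 2) :
    ∃ x ∈ P ∪ C, G₂.Adj t x := by
  have hP₂ : 1 < #P := one_lt_card.2 ⟨r, hr, t, ht, hrt⟩
  have hkPC : k ≤ #(P ∪ C) := hkC.trans <|
    card_add_two_le_card_union hrt hr ht (fun h => G₁.irrefl (hC r h)) htC
  obtain ⟨S, hS, hPS, hSPC⟩ := exists_mem_connSets_between hP hr hC hPk hkPC
  obtain ⟨x, hx, htx⟩ := exists_adj_of_mem_connSets (hSk ▸ hS) (by omega) (hPS ht)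
  exact ⟨x, hSPC hx, htx⟩

lemma adj_of_forall_adj_of_connSets_eq (hSk : connSets k G₁ = connSets k G₂)
    (hfree₁ : G₁.CliqueFree 3) {u t : V} {B : Finset V} (hB : ∀ b ∈ B, G₁.Adj u b ∧ G₂.Adj t b)
    (htB : t ∉ B) (hcard : #B + 1 = k) {b : V} (hb : b ∈ B) : G₁.Adj t b := by
  have hS : insert t B ∈ connSets k G₁ := by
    rw [hSk]
    refine ⟨by rw [card_insert_of_notMem htB, hcard], ?_⟩
    have ht : (G₂.induce (({t} : Finset V) : Set V)).Connected := by
      rw [coe_singleton, induce_singleton_eq_top]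
      exact connected_top
    rw [insert_eq]
    exact induce_connected_union_of_forall_adj ht (mem_singleton_self t) fun b hb => (hB b hb).2
  obtain ⟨c, hc, hbc⟩ := exists_adj_of_induce_connected_s9 hS.2 (mem_insert_of_mem hb)
    (mem_insert_self t B) (ne_of_mem_of_not_mem hb htB)
  rcases mem_insert.1 hc with rfl | hc
  · exact hbc.symm
  · exact absurd hbc (hfree₁.not_adj_of_adj_of_adj (hB b hb).1 (hB c hc).1)

lemma exists_subset_not_adj_or_exists_subset_adj (hSk : connSets k G₁ = connSets k G₂)
    (hfree₁ : G₁.CliqueFree 3) {u t : V} {Z : Finset V} (hZ : ∀ z ∈ Z, G₁.Adj u z)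
    (hZcard : #Z = 2 * k - 4) (htZ : t ∉ Z) :
    (∃ C ⊆ Z, k ≤ #C + 2 ∧ ∀ c ∈ C, ¬G₂.Adj t c) ∨
      ∃ B ⊆ Z, #B + 1 = k ∧ ∀ b ∈ B, G₁.Adj t b ∧ G₂.Adj t b := by
  classical
  have hsplit : #{z ∈ Z | G₂.Adj t z} + #{z ∈ Z | ¬G₂.Adj t z} = #Z :=
    card_filter_add_card_filter_not _
  by_cases hlow : k ≤ #{z ∈ Z | ¬G₂.Adj t z} + 2
  · exact Or.inl ⟨_, filter_subset _ Z, hlow, fun c hc => (mem_filter.1 hc).2⟩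
  obtain ⟨B, hBsub, hBcard⟩ :=
    exists_subset_card_eq (s := {z ∈ Z | G₂.Adj t z}) (n := k - 1) (by omega)
  have hB : ∀ b ∈ B, G₁.Adj u b ∧ G₂.Adj t b := fun b hb =>
    ⟨hZ b (mem_filter.1 (hBsub hb)).1, (mem_filter.1 (hBsub hb)).2⟩
  have htB : t ∉ B := fun ht => htZ (mem_filter.1 (hBsub ht)).1
  exact Or.inr ⟨B, hBsub.trans (filter_subset _ Z), by omega, fun b hb =>
    ⟨adj_of_forall_adj_of_connSets_eq hSk hfree₁ hB htB (by omega) hb, (hB b hb).2⟩⟩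

lemma adj_or_exists_adj_of_connSets_eq (hk : 2 ≤ k) (hSk : connSets k G₁ = connSets k G₂)
    {s t : V} (hst : G₁.Adj s t) {B : Finset V} (hB : ∀ b ∈ B, G₁.Adj t b) (hsB : s ∉ B)
    (hcard : #B + 1 = k) : G₂.Adj s t ∨ ∃ x ∈ B, G₂.Adj s x := by
  obtain ⟨x, hx, hsx⟩ := exists_adj_of_connSets_eq hSk (P := {s, t})
    (by rw [coe_pair]; exact induce_pair_connected_of_adj hst) (by simp) (by simp) hst.ne.symm
    hB hsB (card_le_two.trans hk) (by omega)
  simp only [mem_union, mem_insert, mem_singleton] at hx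
  rcases hx with (rfl | rfl) | hx
  · exact absurd hsx (G₂.irrefl)
  · exact Or.inl hsx
  · exact Or.inr ⟨x, hx, hsx⟩

lemma adj_center_of_connSets_eq (hk : 2 ≤ k) (hSk : connSets k G₁ = connSets k G₂)
    (hfree₁ : G₁.CliqueFree 3) {u : V} {Z : Finset V} (hZ : ∀ z ∈ Z, G₁.Adj u z ∧ G₂.Adj u z)
    (hZcard : #Z = 2 * k - 4) {v : V} (huv : G₁.Adj u v) : G₂.Adj u v := by
  by_contra hn
  have hvZ : v ∉ Z := fun hv => hn (hZ v hv).2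
  rcases exists_subset_not_adj_or_exists_subset_adj hSk hfree₁ (fun z hz => (hZ z hz).1) hZcard
    hvZ with ⟨C, hCZ, hCcard, hC⟩ | ⟨B, hBZ, hBcard, hB⟩
  · obtain ⟨x, hx, hvx⟩ := exists_adj_of_connSets_eq hSk (P := {u, v})
      (by rw [coe_pair]; exact induce_pair_connected_of_adj huv) (by simp) (by simp) huv.ne
      (fun c hc => (hZ c (hCZ hc)).1) (fun h => hvZ (hCZ h)) (card_le_two.trans hk) hCcard
    simp only [mem_union, mem_insert, mem_singleton] at hx
    rcases hx with (rfl | rfl) | hx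
    · exact hn hvx.symm
    · exact G₂.irrefl hvx
    · exact hC x hx hvx
  · obtain ⟨b, hb⟩ : B.Nonempty := card_pos.1 (by omega)
    exact hfree₁.not_adj_of_adj_of_adj huv (hZ b (hBZ hb)).1 (hB b hb).1

lemma adj_of_adj_center_of_connSets_eq (hk : 3 ≤ k) (hSk : connSets k G₁ = connSets k G₂)
    (hfree₁ : G₁.CliqueFree 3) (hfree₂ : G₂.CliqueFree 3) {u : V} {Z : Finset V}
    (hZ : ∀ z ∈ Z, G₁.Adj u z ∧ G₂.Adj u z) (hZcard : #Z = 2 * k - 4)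
    (hX : ∀ v, G₁.Adj u v ↔ G₂.Adj u v) {s t : V} (hs : G₁.Adj u s) (hst : G₁.Adj s t) :
    G₂.Adj s t := by
  by_contra hn
  have hut₁ : ¬G₁.Adj u t := fun hut => hfree₁.not_adj_of_adj_of_adj hs hut hst
  have hut₂ : ¬G₂.Adj u t := fun hut => hut₁ ((hX t).2 hut)
  have htu : u ≠ t := by rintro rfl; exact hn ((hX s).1 hs).symm
  have htZ : t ∉ Z := fun ht => hut₁ (hZ t ht).1
  rcases exists_subset_not_adj_or_exists_subset_adj hSk hfree₁ (fun z hz => (hZ z hz).1) hZcard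
    htZ with ⟨C, hCZ, hCcard, hC⟩ | ⟨B, hBZ, hBcard, hB⟩
  · have hP : (G₁.induce ((({u, s, t} : Finset V)) : Set V)).Connected := by
      rw [coe_insert, coe_pair]
      exact induce_connected_insert (induce_pair_connected_of_adj hst) (by simp) hs.symm
    obtain ⟨x, hx, htx⟩ := exists_adj_of_connSets_eq hSk hP (by simp) (by simp) htu
      (fun c hc => (hZ c (hCZ hc)).1) (fun h => htZ (hCZ h)) (card_le_three.trans hk) hCcard
    simp only [mem_union, mem_insert, mem_singleton] at hx
    rcases hx with (rfl | rfl | rfl) | hx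
    · exact hut₂ htx.symm
    · exact hn htx.symm
    · exact G₂.irrefl htx
    · exact hC x hx htx
  · obtain hst₂ | ⟨x, hx, hsx⟩ := adj_or_exists_adj_of_connSets_eq (by omega) hSk hst
      (fun b hb => (hB b hb).1) (fun h => hn (hB s h).2.symm) hBcard
    · exact hn hst₂
    · exact hfree₂.not_adj_of_adj_of_adj ((hX s).1 hs) (hZ x (hBZ hx)).2 hsx

lemma adj_of_adj_of_adj_center_of_connSets_eq (hk : 3 ≤ k) (hSk : connSets k G₁ = connSets k G₂)
    (hfree₁ : G₁.CliqueFree 3) {u : V} {Z : Finset V}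
    (hZ : ∀ z ∈ Z, G₁.Adj u z ∧ G₂.Adj u z) (hZcard : #Z = 2 * k - 4)
    (hX : ∀ v, G₁.Adj u v ↔ G₂.Adj u v) (hXedge : ∀ a b, G₁.Adj u a → (G₁.Adj a b ↔ G₂.Adj a b))
    {a s t : V} (ha : G₁.Adj u a) (has : G₁.Adj a s) (htu : u ≠ t) (hut₁ : ¬G₁.Adj u t)
    (hst : G₁.Adj s t) : G₂.Adj s t := by
  by_contra hn
  have hat₁ : ¬G₁.Adj a t := hfree₁.not_adj_of_adj_of_adj has.symm hst
  have hat₂ : ¬G₂.Adj a t := fun h => hat₁ ((hXedge a t ha).2 h)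
  have hut₂ : ¬G₂.Adj u t := fun h => hut₁ ((hX t).2 h)
  have hP : (G₁.induce (({a, s, t} : Finset V) : Set V)).Connected := by
    rw [coe_insert, coe_pair]
    exact induce_connected_insert (induce_pair_connected_of_adj hst) (by simp) has.symm
  -- for `k = 3` the path `u a s t` is too long, but `{a, s, t}` alone is a connected `3`-set
  obtain rfl | hk : k = 3 ∨ 4 ≤ k := by omega
  · have hcard : #{a, s, t} = 3 :=
      card_eq_three.2 ⟨a, s, t, has.ne, fun h => hut₁ (h ▸ ha), hst.ne, rfl⟩
    obtain ⟨x, hx, htx⟩ := exists_adj_of_mem_connSets (hSk ▸ ⟨hcard, hP⟩ : _ ∈ connSets 3 G₂)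
      (by norm_num) (by simp : t ∈ ({a, s, t} : Finset V))
    simp only [mem_insert, mem_singleton] at hx
    rcases hx with rfl | rfl | rfl
    · exact hat₂ htx.symm
    · exact hn htx.symm
    · exact G₂.irrefl htx
  have htZ : t ∉ Z := fun ht => hut₁ (hZ t ht).1
  rcases exists_subset_not_adj_or_exists_subset_adj hSk hfree₁ (fun z hz => (hZ z hz).1) hZcard
    htZ with ⟨C, hCZ, hCcard, hC⟩ | ⟨B, hBZ, hBcard, hB⟩
  · have hP' : (G₁.induce (({u, a, s, t} : Finset V) : Set V)).Connected := by
      rw [coe_insert]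
      exact induce_connected_insert hP (by simp) ha.symm
    obtain ⟨x, hx, htx⟩ := exists_adj_of_connSets_eq hSk hP' (by simp) (by simp) htu
      (fun c hc => (hZ c (hCZ hc)).1) (fun h => htZ (hCZ h)) (card_le_four.trans hk) hCcard
    simp only [mem_union, mem_insert, mem_singleton] at hx
    rcases hx with (rfl | rfl | rfl | rfl) | hx
    · exact hut₂ htx.symm
    · exact hat₂ htx.symm
    · exact hn htx.symm
    · exact G₂.irrefl htx
    · exact hC x hx htx
  · obtain hst₂ | ⟨x, hx, hsx⟩ := adj_or_exists_adj_of_connSets_eq (by omega) hSk hst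
      (fun b hb => (hB b hb).1) (fun h => hn (hB s h).2.symm) hBcard
    · exact hn hst₂
    · exact hfree₁.not_adj_of_adj_of_adj (hB x hx).1 hst.symm
        ((hXedge x s (hZ x (hBZ hx)).1).2 hsx.symm)

lemma adj_center_iff_of_connSets_eq (hk : 2 ≤ k) (hSk : connSets k G₁ = connSets k G₂)
    (hfree₁ : G₁.CliqueFree 3) (hfree₂ : G₂.CliqueFree 3) {u : V} {Z : Finset V}
    (hZ : ∀ z ∈ Z, G₁.Adj u z ∧ G₂.Adj u z) (hZcard : #Z = 2 * k - 4) (v : V) :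
    G₁.Adj u v ↔ G₂.Adj u v :=
  ⟨adj_center_of_connSets_eq hk hSk hfree₁ hZ hZcard,
    adj_center_of_connSets_eq hk hSk.symm hfree₂ (fun z hz => (hZ z hz).symm) hZcard⟩

lemma adj_iff_of_adj_center_of_connSets_eq (hk : 3 ≤ k) (hSk : connSets k G₁ = connSets k G₂)
    (hfree₁ : G₁.CliqueFree 3) (hfree₂ : G₂.CliqueFree 3) {u : V} {Z : Finset V}
    (hZ : ∀ z ∈ Z, G₁.Adj u z ∧ G₂.Adj u z) (hZcard : #Z = 2 * k - 4)
    (hX : ∀ v, G₁.Adj u v ↔ G₂.Adj u v) {s : V} (hs : G₁.Adj u s) (t : V) :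
    G₁.Adj s t ↔ G₂.Adj s t :=
  ⟨adj_of_adj_center_of_connSets_eq hk hSk hfree₁ hfree₂ hZ hZcard hX hs,
    adj_of_adj_center_of_connSets_eq hk hSk.symm hfree₂ hfree₁ (fun z hz => (hZ z hz).symm)
      hZcard (fun v => (hX v).symm) ((hX s).1 hs)⟩

lemma adj_iff_of_adj_of_adj_center_of_connSets_eq (hk : 3 ≤ k)
    (hSk : connSets k G₁ = connSets k G₂) (hfree₁ : G₁.CliqueFree 3) (hfree₂ : G₂.CliqueFree 3)
    {u : V} {Z : Finset V} (hZ : ∀ z ∈ Z, G₁.Adj u z ∧ G₂.Adj u z) (hZcard : #Z = 2 * k - 4)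
    (hX : ∀ v, G₁.Adj u v ↔ G₂.Adj u v) (hXedge : ∀ a b, G₁.Adj u a → (G₁.Adj a b ↔ G₂.Adj a b))
    {a s t : V} (ha : G₁.Adj u a) (has : G₁.Adj a s) (htu : u ≠ t) (hut : ¬G₁.Adj u t) :
    G₁.Adj s t ↔ G₂.Adj s t :=
  ⟨adj_of_adj_of_adj_center_of_connSets_eq hk hSk hfree₁ hZ hZcard hX hXedge ha has htu hut,
    adj_of_adj_of_adj_center_of_connSets_eq hk hSk.symm hfree₂ (fun z hz => (hZ z hz).symm)
      hZcard (fun v => (hX v).symm) (fun a b ha => (hXedge a b ((hX a).2 ha)).symm)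
      ((hX a).1 ha) ((hXedge a s ha).1 has) htu (mt (hX t).2 hut)⟩

end SimpleGraph

open SimpleGraph

theorem stmt9_general {V : Type*} [DecidableEq V] (k : ℕ) (hk : 2 ≤ k)
    (G₁ G₂ : SimpleGraph V)
    (hfree₁ : G₁.CliqueFree 3) (hfree₂ : G₂.CliqueFree 3)
    (hSk : connSets k G₁ = connSets k G₂)
    (u : V) (Z : Finset V) (hZcard : Z.card = 2 * k - 4)
    (hZ : (Z : Set V) ⊆ G₁.neighborSet u ∩ G₂.neighborSet u) :
    G₁.neighborSet u = G₂.neighborSet u ∧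
    setNbhd G₂ ({u} ∪ G₁.neighborSet u) = setNbhd G₁ ({u} ∪ G₁.neighborSet u) ∧
    (∀ s t : V, s ∈ ({u} : Set V) ∪ G₁.neighborSet u → (G₁.Adj s t ↔ G₂.Adj s t)) ∧
    (∀ s t : V, s ∈ setNbhd G₁ ({u} ∪ G₁.neighborSet u) →
      t ∈ setNbhd G₁ ({u} ∪ G₁.neighborSet u) → (G₁.Adj s t ↔ G₂.Adj s t)) := by
  obtain rfl | hk3 : k = 2 ∨ 3 ≤ k := by omega
  · obtain rfl := eq_of_connSets_two_eq hSk
    exact ⟨rfl, rfl, fun _ _ _ => Iff.rfl, fun _ _ _ _ => Iff.rfl⟩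
  have hZ' : ∀ z ∈ Z, G₁.Adj u z ∧ G₂.Adj u z := fun z hz => hZ hz
  have hX := adj_center_iff_of_connSets_eq hk hSk hfree₁ hfree₂ hZ' hZcard
  have hXedge : ∀ s t, G₁.Adj u s → (G₁.Adj s t ↔ G₂.Adj s t) := fun s t hs =>
    adj_iff_of_adj_center_of_connSets_eq hk3 hSk hfree₁ hfree₂ hZ' hZcard hX hs t
  have hedge : ∀ s t : V, s ∈ ({u} : Set V) ∪ G₁.neighborSet u → (G₁.Adj s t ↔ G₂.Adj s t) := by
    rintro s t (rfl | hs)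
    exacts [hX t, hXedge s t hs]
  refine ⟨Set.ext hX, setNbhd_congr fun a ha b => (hedge a b ha).symm, hedge, ?_⟩
  rintro s t ⟨hsX, a, ha, has⟩ ⟨htX, -⟩
  have hua : G₁.Adj u a := ha.resolve_left (by rintro rfl; exact hsX (Or.inr has))
  exact adj_iff_of_adj_of_adj_center_of_connSets_eq hk3 hSk hfree₁ hfree₂ hZ' hZcard hX hXedge
    hua has (fun h => htX (Or.inl h.symm)) (fun h => htX (Or.inr h))

theorem stmt9 {V : Type*} [Fintype V] [DecidableEq V] (k : ℕ) (hk : 2 ≤ k)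
    (G₁ G₂ : SimpleGraph V)
    (hfree₁ : G₁.CliqueFree 3) (hfree₂ : G₂.CliqueFree 3)
    (hSk : connSets k G₁ = connSets k G₂)
    (u : V) (Z : Finset V) (hZcard : Z.card = 2 * k - 4)
    (hZ : (Z : Set V) ⊆ G₁.neighborSet u ∩ G₂.neighborSet u) :
    G₁.neighborSet u = G₂.neighborSet u ∧
    setNbhd G₂ ({u} ∪ G₁.neighborSet u) = setNbhd G₁ ({u} ∪ G₁.neighborSet u) ∧
    (∀ s t : V, s ∈ ({u} : Set V) ∪ G₁.neighborSet u → (G₁.Adj s t ↔ G₂.Adj s t)) ∧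
    (∀ s t : V, s ∈ setNbhd G₁ ({u} ∪ G₁.neighborSet u) →
      t ∈ setNbhd G₁ ({u} ∪ G₁.neighborSet u) → (G₁.Adj s t ↔ G₂.Adj s t)) :=
  stmt9_general k hk G₁ G₂ hfree₁ hfree₂ hSk u Z hZcard hZ
end

section
/- Let k ≥ 2 be an integer, V a finite set, and C a family of k-element subsets of V. Let H = (E, E_N, E_U) be a partial graph on V and T ⊆ V such that T induces a connected subgraph of the graph (V, E), |T| ≥ k − 1, and N_H(T) ≠ ∅. Then there exists a partial supergraph H' of H such that (i) for every x ∈ V \ N_H[T] and every y ∈ N_H(T), the pair {x,y} does not belong to E_U(H'); and (ii) every simple graph G on V that is a supergraph of H with N_G(T) = N_H(T) and S_k(G) = C is a supergraph of H'. -/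
/-- A partial graph on `V`: pairwise disjoint sets of known edges `E`, known
non-edges `EN` and unknown pairs `EU` whose union is the set of all unordered
pairs of distinct vertices. -/
structure PartialGraph (V : Type*) where
  E : Set (Sym2 V)
  EN : Set (Sym2 V)
  EU : Set (Sym2 V)
  disjEEN : Disjoint E EN
  disjEEU : Disjoint E EU
  disjENEU : Disjoint EN EU
  cover : E ∪ EN ∪ EU = {e : Sym2 V | ¬ e.IsDiag}

/-- A simple graph `G` is a supergraph of a partial graph `H`. -/
def PartialGraph.Supergraph {V : Type*} (H : PartialGraph V) (G : SimpleGraph V) : Prop :=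
  H.E ⊆ G.edgeSet ∧ Disjoint G.edgeSet H.EN

/-- `H'` is a partial supergraph of `H`. -/
def PartialGraph.PartialSupergraph {V : Type*} (H H' : PartialGraph V) : Prop :=
  H.E ⊆ H'.E ∧ H.EN ⊆ H'.EN ∧ H'.EU ⊆ H.EU

/-- The open neighborhood `N_H(T)` of a set `T` in a partial graph `H`,
using only the known edges. -/
def PartialGraph.nbhd {V : Type*} (H : PartialGraph V) (T : Set V) : Set V :=
  {x | x ∉ T ∧ ∃ t ∈ T, s(t, x) ∈ H.E}

/-! For every `y ∈ N_H(T)` fix `B_y ⊆ T` of size `k - 2` such that `{y} ∪ B_y` is connected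
through known edges. A vertex `x ∉ N_H[T]` has no neighbour in `T` in any admissible `G`, so in
such a `G` the set `{x, y} ∪ B_y` is connected exactly when `x ~ y`. Hence `C` determines every
pair `{x, y}`, and `H'` records these pairs as edges or non-edges accordingly. -/

open SimpleGraph Finset

namespace SimpleGraph

variable {V : Type*} {G : SimpleGraph V}

lemma connected_induce_singleton (v : V) : (G.induce {v}).Connected := by
  rw [induce_singleton_eq_top]
  exact connected_top

lemma connected_induce_insert {s : Set V} {u v : V} (hs : (G.induce s).Connected) (hu : u ∈ s)
    (hvu : G.Adj v u) : (G.induce (insert v s)).Connected := by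
  simpa only [Set.singleton_union] using connected_induce_union
    (connected_induce_singleton v).preconnected hs.preconnected (Set.mem_singleton v) hu hvu

lemma exists_connected_induce_insert {s T : Set V} (hT : (G.induce T).Connected)
    (hs : (G.induce s).Connected) (hsT : s ⊆ T) {w : V} (hwT : w ∈ T) (hws : w ∉ s) :
    ∃ v ∈ T, v ∉ s ∧ (G.induce (insert v s)).Connected := by
  obtain ⟨⟨u, hu⟩⟩ := hs.nonempty
  obtain ⟨p⟩ := hT.preconnected ⟨u, hsT hu⟩ ⟨w, hwT⟩
  obtain ⟨d, -, hd_in, hd_out⟩ :=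
    p.exists_boundary_dart {x : T | (x : V) ∈ s} hu hws
  exact ⟨d.snd, d.snd.2, hd_out, connected_induce_insert hs hd_in d.adj.symm⟩

lemma exists_finset_connected_induce_card {T : Set V} (hT : (G.induce T).Connected) {t : V}
    (ht : t ∈ T) {m : ℕ} (hm : m < T.ncard) :
    ∃ s : Finset V, ↑s ⊆ T ∧ t ∈ s ∧ #s = m + 1 ∧ (G.induce (s : Set V)).Connected := by
  classical
  induction m with
  | zero =>
    refine ⟨{t}, by simpa using ht, mem_singleton_self t, card_singleton t, ?_⟩
    rw [coe_singleton]
    exact connected_induce_singleton t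
  | succ m ih =>
    obtain ⟨s, hsT, hts, hcard, hs⟩ := ih (by omega)
    obtain ⟨w, hwT, hws⟩ := Set.exists_mem_notMem_of_ncard_lt_ncard
      (by rwa [Set.ncard_coe_finset, hcard] : (s : Set V).ncard < T.ncard)
    obtain ⟨v, hvT, hvs, hconn⟩ := exists_connected_induce_insert hT hs hsT hwT hws
    refine ⟨insert v s, ?_, mem_insert_of_mem hts, ?_, by rwa [coe_insert]⟩
    · rw [coe_insert]
      exact Set.insert_subset hvT hsT
    · rw [card_insert_of_notMem hvs, hcard]

lemma exists_finset_connected_induce_insert {T : Set V} (hT : (G.induce T).Connected)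
    (hTf : T.Finite) {t y : V} (ht : t ∈ T) (hy : y ∉ T) (hyt : G.Adj y t) {m : ℕ}
    (hm : m ≤ T.ncard) :
    ∃ B : Finset V, ↑B ⊆ T ∧ y ∉ B ∧ #B = m ∧ (G.induce (insert y (B : Set V))).Connected := by
  classical
  obtain ⟨s, hsT, hys, hcard, hs⟩ := exists_finset_connected_induce_card
    (connected_induce_insert hT ht hyt) (Set.mem_insert y T)
    (by rw [Set.ncard_insert_of_notMem hy hTf]; omega : m < (insert y T).ncard)
  refine ⟨s.erase y, fun x hx => ?_, notMem_erase y s,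
    by rw [card_erase_of_mem hys, hcard]; rfl, ?_⟩
  · obtain ⟨hxy, hxs⟩ := mem_erase.mp hx
    exact (hsT hxs).resolve_left hxy
  · rwa [← coe_insert, insert_erase hys]

lemma edgeSet_inter_image_mk {R : Set (V × V)} {q : V × V → Prop}
    (h : ∀ p ∈ R, G.Adj p.1 p.2 ↔ q p) :
    G.edgeSet ∩ Sym2.mk.uncurry '' R = Sym2.mk.uncurry '' {p | p ∈ R ∧ q p} := by
  ext e
  constructor
  · rintro ⟨he, p, hp, rfl⟩
    exact ⟨p, ⟨hp, (h p hp).1 he⟩, rfl⟩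
  · rintro ⟨p, ⟨hp, hq⟩, rfl⟩
    exact ⟨(h p hp).2 hq, p, hp, rfl⟩

lemma adj_iff_insert_insert_mem_connSets [DecidableEq V] {B : Finset V} {x y : V}
    (hB : (G.induce (insert y (B : Set V))).Connected) (hxy : x ≠ y) (hxB : x ∉ B)
    (hyB : y ∉ B) (hx : ∀ b ∈ B, ¬ G.Adj x b) :
    G.Adj x y ↔ insert x (insert y B) ∈ connSets (#B + 2) G := by
  have hcard : #(insert x (insert y B)) = #B + 2 := by
    rw [card_insert_of_notMem (by simp [hxy, hxB]), card_insert_of_notMem hyB]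
  simp only [connSets, Set.mem_ofPred_eq, hcard, true_and]
  rw [coe_insert, coe_insert]
  refine ⟨connected_induce_insert hB (Set.mem_insert y _), fun hconn => ?_⟩
  have : Nontrivial (insert x (insert y (B : Set V)) : Set V) :=
    ⟨⟨x, by simp⟩, ⟨y, by simp⟩, fun h => hxy (congrArg Subtype.val h)⟩
  obtain ⟨⟨z, hz⟩, hxz⟩ := hconn.preconnected.exists_adj_of_nontrivial ⟨x, by simp⟩
  rcases hz with rfl | rfl | hzB
  · exact (hxz.ne rfl).elim
  · exact hxz
  · exact absurd hxz (hx z hzB)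

end SimpleGraph

namespace PartialGraph

variable {V : Type*} (H : PartialGraph V)

def settle (D P : Set (Sym2 V)) : PartialGraph V where
  E := H.E ∪ (H.EU ∩ D ∩ P)
  EN := H.EN ∪ ((H.EU ∩ D) \ P)
  EU := H.EU \ D
  disjEEN := by
    have := H.disjEEN; have := H.disjEEU; have := H.disjENEU
    simp only [Set.disjoint_left, Set.mem_union, Set.mem_inter_iff, Set.mem_sdiff] at *
    grind
  disjEEU := by
    have := H.disjEEU
    simp only [Set.disjoint_left, Set.mem_union, Set.mem_inter_iff, Set.mem_sdiff] at *
    grind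
  disjENEU := by
    have := H.disjENEU
    simp only [Set.disjoint_left, Set.mem_union, Set.mem_inter_iff, Set.mem_sdiff] at *
    grind
  cover := by
    rw [← H.cover]
    ext e
    simp only [Set.mem_union, Set.mem_inter_iff, Set.mem_sdiff]
    tauto

lemma partialSupergraph_settle (D P : Set (Sym2 V)) : H.PartialSupergraph (H.settle D P) :=
  ⟨Set.subset_union_left, Set.subset_union_left, fun _ he => he.1⟩

lemma exists_finset_connected_induce_insert_of_mem_nbhd {T : Set V}
    (hT : ((fromEdgeSet H.E).induce T).Connected) (hTf : T.Finite) {y : V} (hy : y ∈ H.nbhd T)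
    {m : ℕ} (hm : m ≤ T.ncard) :
    ∃ B : Finset V, ↑B ⊆ T ∧ y ∉ B ∧ #B = m ∧
      ((fromEdgeSet H.E).induce (insert y (B : Set V))).Connected := by
  obtain ⟨hyT, t, ht, hty⟩ := hy
  exact exists_finset_connected_induce_insert hT hTf ht hyT
    ((fromEdgeSet_adj _).2 ⟨Sym2.eq_swap ▸ hty, fun h => hyT (h ▸ ht)⟩) hm

variable {H}

lemma Supergraph.fromEdgeSet_le {G : SimpleGraph V} (hG : H.Supergraph G) :
    fromEdgeSet H.E ≤ G :=
  fun _ _ hab => hG.1 hab.1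

lemma Supergraph.settle {G : SimpleGraph V} (hG : H.Supergraph G) {D P : Set (Sym2 V)}
    (hGD : G.edgeSet ∩ D = P) : (H.settle D P).Supergraph G := by
  refine ⟨Set.union_subset hG.1 fun e he => (hGD ▸ he.2 : e ∈ G.edgeSet ∩ D).1,
    Set.disjoint_union_right.2 ⟨hG.2, Set.disjoint_left.2 fun e he he' => he'.2 ?_⟩⟩
  exact hGD ▸ ⟨he, he'.1.2⟩

end PartialGraph

theorem stmt10_general {V : Type*} [DecidableEq V] (k : ℕ) (hk : 2 ≤ k)
    (C : Set (Finset V))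
    (H : PartialGraph V) (T : Set V)
    (hTconn : ((SimpleGraph.fromEdgeSet H.E).induce T).Connected)
    (hTcard : k - 1 ≤ T.ncard) :
    ∃ H' : PartialGraph V, H.PartialSupergraph H' ∧
      (∀ x ∉ T ∪ H.nbhd T, ∀ y ∈ H.nbhd T, s(x, y) ∉ H'.EU) ∧
      (∀ G : SimpleGraph V, H.Supergraph G → setNbhd G T = H.nbhd T →
        connSets k G = C → H'.Supergraph G) := by
  have hTf : T.Finite := Set.finite_of_ncard_pos (by omega)
  choose! B hB using fun y (hy : y ∈ H.nbhd T) =>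
    H.exists_finset_connected_induce_insert_of_mem_nbhd hTconn hTf hy (m := k - 2) (by omega)
  let R : Set (V × V) := {p | p.1 ∉ T ∪ H.nbhd T ∧ p.2 ∈ H.nbhd T}
  let Q : Set (V × V) := {p | p ∈ R ∧ insert p.1 (insert p.2 (B p.2)) ∈ C}
  refine ⟨H.settle (Sym2.mk.uncurry '' R) (Sym2.mk.uncurry '' Q), H.partialSupergraph_settle _ _,
    fun x hx y hy he => he.2 ⟨(x, y), ⟨hx, hy⟩, rfl⟩, fun G hG hGT hGC => ?_⟩
  refine hG.settle (edgeSet_inter_image_mk fun ⟨x, y⟩ ⟨hx, hy⟩ => ?_)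
  obtain ⟨hBT, hyB, hBcard, hBconn⟩ := hB y hy
  have hxT : x ∉ T := fun h => hx (Or.inl h)
  rw [← hGC, show k = #(B y) + 2 by omega]
  refine adj_iff_insert_insert_mem_connSets (hBconn.mono (comap_monotone _ hG.fromEdgeSet_le))
    (fun h => hx (Or.inr (h ▸ hy))) (fun h => hxT (hBT h)) hyB fun b hb hxb => hx (Or.inr ?_)
  exact hGT ▸ ⟨hxT, b, hBT hb, hxb.symm⟩

theorem stmt10 {V : Type*} [Fintype V] [DecidableEq V] (k : ℕ) (hk : 2 ≤ k)
    (C : Set (Finset V)) (hC : ∀ S ∈ C, S.card = k)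
    (H : PartialGraph V) (T : Set V)
    (hTconn : ((SimpleGraph.fromEdgeSet H.E).induce T).Connected)
    (hTcard : k - 1 ≤ T.ncard)
    (hN : (H.nbhd T).Nonempty) :
    ∃ H' : PartialGraph V, H.PartialSupergraph H' ∧
      (∀ x ∉ T ∪ H.nbhd T, ∀ y ∈ H.nbhd T, s(x, y) ∉ H'.EU) ∧
      (∀ G : SimpleGraph V, H.Supergraph G → setNbhd G T = H.nbhd T →
        connSets k G = C → H'.Supergraph G) :=
  stmt10_general k hk C H T hTconn hTcard
end

section
/- Let k ≥ 2 be an integer, V a finite set, and C a family of k-element subsets of V. Let H = (E, E_N, E_U) be a partial graph on V and T ⊆ V such that T induces a connected subgraph of the graph (V, E), |T| ≥ k − 1, and N_H(T) ≠ ∅. Suppose moreover that there exists at least one connected simple graph G₀ on V that is a supergraph of H with N_{G₀}(T) = N_H(T) and S_k(G₀) = C. Then there exist a partial supergraph H' of H and a partition V = L₀ ∪ L₁ ∪ … ∪ L_ℓ with L₀ = T such that: (i) for all 0 ≤ i < j ≤ ℓ with (i,j) ≠ (0,1) and all x ∈ L_i, y ∈ L_j, the pair {x,y} does not belong to E_U(H');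 (ii) for each 0 ≤ i ≤ ℓ, L_i is exactly the set of vertices x ∈ V for which the minimum over t ∈ T of the graph distance between x and t in the graph (V, E(H')) equals i; and (iii) every simple graph G on V that is a supergraph of H with N_G(T) = N_H(T) and S_k(G) = C is a supergraph of H'. -/
/-- The distance (in `ℕ∞`) from a vertex `x` to a set `T` in a graph `G`:
the minimum over `t ∈ T` of the length of a shortest walk from `x` to `t`
(`⊤` if no vertex of `T` is reachable from `x`). -/
noncomputable def distToSet {V : Type*} (G : SimpleGraph V) (T : Set V) (x : V) : ℕ∞ :=
  ⨅ t ∈ T, ⨅ w : G.Walk x t, (w.length : ℕ∞)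

/-!
Let `𝓕` be the set of graphs consistent with `H`, `N_H(T)` and `C`, and `K = sInf 𝓕` the graph
of edges forced in all of them; `H'` declares the edges of `K` known, the pairs that are edges
of no graph in `𝓕` known non-edges, and everything else unknown.

The point is that every `G ∈ 𝓕` has the same distance to `T` as `K`, proved by induction on
the distance. Suppose `x` is joined to `T` by a `K`-walk `w` of length `j ≥ 1` and `y` is farther
than `j` from `T` in every graph of `𝓕`. Inside `T ∪ w.support`, which is connected in `K` and
has at least `k - 1` vertices, pick a connected `(k-1)`-set `B ∋ x`; every vertex of `B` other
than `x` is closer than `j` to `T`, so it is not a neighbour of `y` in any graph of `𝓕`. Hence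
`x ~ y` iff `B ∪ {y} ∈ C`, the same answer in every graph of `𝓕`. This forces the edge from a
vertex at distance `n + 1` to its predecessor on a shortest path and, together with
`N_G(T) = N_H(T)`, it decides every pair at distinct distances from `T` other than the pairs
between `T` and its neighbourhood.
-/

open SimpleGraph

namespace SimpleGraph

variable {V : Type*} {G : SimpleGraph V}

lemma connected_induce_insert_s11 {A : Set V} {a v : V} (hA : (G.induce A).Connected) (ha : a ∈ A)
    (hav : G.Adj a v) : (G.induce (insert v A)).Connected := by
  have h := induce_union_connected hA.preconnected
    (induce_pair_connected_of_adj hav).preconnected ⟨a, ha, by simp⟩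
  rwa [show A ∪ {a, v} = insert v A by ext; simp; grind] at h

lemma Connected.induce_mono {G' : SimpleGraph V} {A : Set V} (h : G ≤ G')
    (hA : (G.induce A).Connected) : (G'.induce A).Connected :=
  hA.mono fun _ _ hab => h hab

variable [DecidableEq V]

lemma exists_finset_connected_induce_card_eq {A : Set V} (hA : (G.induce A).Connected)
    {x : V} (hx : x ∈ A) {m : ℕ} (hm₁ : 1 ≤ m) (hm : m ≤ A.ncard) :
    ∃ B : Finset V, ↑B ⊆ A ∧ x ∈ B ∧ B.card = m ∧ (G.induce (B : Set V)).Connected := by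
  induction m, hm₁ using Nat.le_induction with
  | base =>
    refine ⟨{x}, by simpa using hx, Finset.mem_singleton_self x, rfl, ?_⟩
    rw [Finset.coe_singleton, induce_singleton_eq_top]
    exact connected_top
  | succ m _ ih =>
    obtain ⟨B, hBA, hxB, rfl, hB⟩ := ih (by omega)
    obtain ⟨b, hbA, hbB⟩ : ∃ b ∈ A, b ∉ B := by
      by_contra! h
      have := Set.ncard_le_ncard h B.finite_toSet
      rw [Set.ncard_coe_finset] at this
      omega
    obtain ⟨w⟩ := hA.preconnected ⟨x, hx⟩ ⟨b, hbA⟩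
    obtain ⟨d, -, hd₁, hd₂⟩ := w.exists_boundary_dart {v : A | v.1 ∈ B} hxB hbB
    refine ⟨insert d.snd.1 B, ?_, Finset.mem_insert_of_mem hxB,
      Finset.card_insert_of_notMem hd₂, ?_⟩
    · rw [Finset.coe_insert]
      exact Set.insert_subset d.snd.2 hBA
    · rw [Finset.coe_insert]
      exact connected_induce_insert_s11 hB hd₁ d.adj

lemma adj_iff_insert_mem_connSets {k : ℕ} {B : Finset V} {x y : V} (hk : B.card + 1 = k)
    (hxB : x ∈ B) (hyB : y ∉ B) (hB : (G.induce (B : Set V)).Connected)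
    (hy : ∀ b ∈ B, G.Adj y b → b = x) :
    G.Adj x y ↔ insert y B ∈ connSets k G := by
  refine ⟨fun hxy => ⟨by rw [Finset.card_insert_of_notMem hyB, hk], ?_⟩, ?_⟩
  · rw [Finset.coe_insert]
    exact connected_induce_insert_s11 hB hxB hxy
  · rintro ⟨-, hconn⟩
    obtain ⟨w⟩ := hconn.preconnected ⟨x, by simp [hxB]⟩ ⟨y, by simp⟩
    obtain ⟨d, -, hd₁, hd₂⟩ :=
      w.exists_boundary_dart {v : ↥(insert y B : Finset V) | v.1 ∈ B} hxB hyB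
    have hdy : d.snd.1 = y := by
      have := d.snd.2
      simp only [Finset.coe_insert, Set.mem_insert_iff, Finset.mem_coe] at this
      exact this.resolve_right hd₂
    have hadj : G.Adj d.fst.1 d.snd.1 := d.adj
    rw [hdy] at hadj
    rwa [← hy _ hd₁ hadj.symm]

end SimpleGraph

section distToSet

variable {V : Type*} {G G' : SimpleGraph V} {T : Set V} {x y t : V}

lemma distToSet_le_length (ht : t ∈ T) (w : G.Walk x t) : distToSet G T x ≤ w.length :=
  (iInf₂_le t ht).trans (iInf_le _ w)

lemma exists_walk_length_eq_of_distToSet_eq {n : ℕ} (h : distToSet G T x = n) :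
    ∃ t ∈ T, ∃ w : G.Walk x t, w.length = n := by
  rw [distToSet, iInf_subtype'] at h
  have : Nonempty T := by
    by_contra hT
    rw [not_nonempty_iff] at hT
    rw [iInf_of_empty] at h
    exact ENat.top_ne_natCast n h
  obtain ⟨⟨t, ht⟩, hteq⟩ := ENat.exists_eq_iInf fun t : T => G.edist x t
  obtain ⟨w, hw⟩ := exists_walk_of_edist_eq_coe (hteq.trans h)
  exact ⟨t, ht, w, hw⟩

lemma distToSet_eq_zero_iff : distToSet G T x = 0 ↔ x ∈ T := by
  refine ⟨fun h => ?_, fun hx => nonpos_iff_eq_zero.mp ?_⟩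
  · obtain ⟨t, ht, w, hw⟩ := exists_walk_length_eq_of_distToSet_eq (n := 0) (by simpa using h)
    rwa [Walk.eq_of_length_eq_zero hw]
  · simpa using distToSet_le_length hx (Walk.nil : G.Walk x x)

lemma distToSet_le_of_adj (hxy : G.Adj x y) : distToSet G T x ≤ distToSet G T y + 1 := by
  cases h : distToSet G T y with
  | top => simp
  | coe n =>
    obtain ⟨t, ht, w, hw⟩ := exists_walk_length_eq_of_distToSet_eq h
    simpa [hw, add_comm] using distToSet_le_length ht (w.cons hxy)

lemma distToSet_anti (h : G ≤ G') : distToSet G' T x ≤ distToSet G T x :=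
  iInf₂_mono fun _ _ => edist_anti h

lemma distToSet_lt_card [Fintype V] (hG : G.Connected) (hT : T.Nonempty) :
    distToSet G T x < Fintype.card V := by
  classical
  obtain ⟨t, ht⟩ := hT
  let p := (hG.preconnected x t).some.toPath
  exact (distToSet_le_length ht p.1).trans_lt (by exact_mod_cast p.2.length_lt)

end distToSet

namespace PartialGraph

variable {V : Type*}

def ofFamily (F : Set (SimpleGraph V)) (hF : F.Nonempty) : PartialGraph V where
  E := (sInf F).edgeSet
  EN := {e | ¬ e.IsDiag} \ (sSup F).edgeSet
  EU := (sSup F).edgeSet \ (sInf F).edgeSet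
  disjEEN := Set.disjoint_sdiff_right.mono_left (edgeSet_mono (sInf_le_sSup hF))
  disjEEU := Set.disjoint_sdiff_right
  disjENEU := Set.disjoint_sdiff_left.mono_right Set.sdiff_subset
  cover := by
    have hIS := edgeSet_mono (sInf_le_sSup hF)
    have hSnd : (sSup F).edgeSet ⊆ {e | ¬ e.IsDiag} := fun e => not_isDiag_of_mem_edgeSet _
    ext e
    have := @hIS e
    have := @hSnd e
    simp only [Set.mem_union, Set.mem_sdiff, Set.mem_ofPred_eq] at *
    tauto

variable {F : Set (SimpleGraph V)} (hF : F.Nonempty)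

lemma supergraph_ofFamily {G : SimpleGraph V} (hG : G ∈ F) : (ofFamily F hF).Supergraph G :=
  ⟨edgeSet_mono (sInf_le hG), Set.disjoint_sdiff_right.mono_left (edgeSet_mono (le_sSup hG))⟩

lemma partialSupergraph_ofFamily {H : PartialGraph V} (hH : ∀ G ∈ F, H.Supergraph G) :
    H.PartialSupergraph (ofFamily F hF) := by
  have hE : H.E ⊆ (sInf F).edgeSet := by
    rw [edgeSet_sInf hF]
    exact Set.subset_sInter fun _ ⟨G, hG, hGe⟩ => hGe ▸ (hH G hG).1
  have hEN : ∀ e ∈ H.EN, e ∉ (sSup F).edgeSet := by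
    intro e heN he
    rw [edgeSet_sSup] at he
    obtain ⟨_, ⟨G, hG, rfl⟩, heG⟩ := he
    exact Set.disjoint_left.mp (hH G hG).2 heG heN
  refine ⟨hE, fun e heN => ⟨?_, hEN e heN⟩, fun e ⟨heS, heI⟩ => ?_⟩
  · rw [← H.cover]
    exact Or.inl (Or.inr heN)
  · have : e ∈ H.E ∪ H.EN ∪ H.EU := H.cover ▸ not_isDiag_of_mem_edgeSet _ heS
    rcases this with (he | he) | he
    · exact absurd (hE he) heI
    · exact absurd heS (hEN e he)
    · exact he

lemma mk_notMem_EU_ofFamily {x y : V}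
    (h : ∀ G ∈ F, ∀ G' ∈ F, G.Adj x y → G'.Adj x y) : s(x, y) ∉ (ofFamily F hF).EU := by
  rintro ⟨hS, hI⟩
  obtain ⟨G, hG, hxy⟩ := sSup_adj.mp hS
  exact hI (sInf_adj.mpr ⟨fun G' hG' => h G hG G' hG' hxy, hxy.ne⟩)

end PartialGraph

section consistentGraphs

variable {V : Type*}

def consistentGraphs (k : ℕ) (C : Set (Finset V)) (H : PartialGraph V) (T : Set V) :
    Set (SimpleGraph V) :=
  {G | H.Supergraph G ∧ setNbhd G T = H.nbhd T ∧ connSets k G = C}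

variable {k : ℕ} {C : Set (Finset V)} {H : PartialGraph V} {T : Set V}
  {G G' : SimpleGraph V} {x y : V}

local notation "𝓕" => consistentGraphs k C H T

lemma fromEdgeSet_le_sInf_consistentGraphs : fromEdgeSet H.E ≤ sInf 𝓕 :=
  le_sInf fun _ hG _ _ hab => hG.1.1 hab.1

lemma distToSet_sInf_le_one (hG : G ∈ 𝓕) (hx : x ∈ setNbhd G T) :
    distToSet (sInf 𝓕) T x ≤ 1 := by
  rw [hG.2.1] at hx
  obtain ⟨hxT, t, ht, htx⟩ := hx
  have htx : (sInf 𝓕).Adj t x :=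
    fromEdgeSet_le_sInf_consistentGraphs ⟨htx, fun h => hxT (h ▸ ht)⟩
  simpa [distToSet_eq_zero_iff.mpr ht] using distToSet_le_of_adj (T := T) htx.symm

lemma adj_of_adj_of_walk [DecidableEq V] (hk : 2 ≤ k)
    (hTconn : ((fromEdgeSet H.E).induce T).Connected) (hTcard : k - 1 ≤ T.ncard) {t : V}
    (w : (sInf 𝓕).Walk x t) (ht : t ∈ T) (hw : 1 ≤ w.length)
    (hy : ∀ G ∈ 𝓕, (w.length : ℕ∞) < distToSet G T y)
    (hG : G ∈ 𝓕) (hG' : G' ∈ 𝓕) (hxy : G.Adj x y) : G'.Adj x y := by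
  set A := T ∪ {v | v ∈ w.support}
  have hA : ((sInf 𝓕).induce A).Connected :=
    induce_union_connected
      (hTconn.induce_mono fromEdgeSet_le_sInf_consistentGraphs).preconnected
      w.connected_induce_support.preconnected ⟨t, ht, w.end_mem_support⟩
  have hdist : ∀ b ∈ A, b ≠ x → distToSet (sInf 𝓕) T b + 1 ≤ w.length := by
    rintro b (hb | hb) hbx
    · rw [distToSet_eq_zero_iff.mpr hb, zero_add]
      exact_mod_cast hw
    · obtain ⟨q, r, hqr⟩ := Walk.mem_support_iff_exists_append.mp hb
      have hq : q.length ≠ 0 := fun h => hbx (q.eq_of_length_eq_zero h).symm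
      calc distToSet (sInf 𝓕) T b + 1 ≤ r.length + 1 := by
            gcongr; exact distToSet_le_length ht r
        _ ≤ w.length := by rw [hqr, Walk.length_append]; exact_mod_cast by omega
  have hfar : ∀ G ∈ 𝓕, ∀ b ∈ A, b ≠ x → ¬ G.Adj y b := fun G hG b hb hbx hyb =>
    (hy G hG).not_ge <| calc
      distToSet G T y ≤ distToSet G T b + 1 := distToSet_le_of_adj hyb
      _ ≤ distToSet (sInf 𝓕) T b + 1 := by gcongr; exact distToSet_anti (sInf_le hG)
      _ ≤ w.length := hdist b hb hbx
  have hyA : y ∉ A := fun hyA => (hy G hG).not_ge <| (distToSet_anti (sInf_le hG)).trans <|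
    le_self_add.trans (hdist y hyA hxy.ne.symm)
  obtain ⟨B, hBA, hxB, hBcard, hB⟩ := exists_finset_connected_induce_card_eq hA
    (Or.inr w.start_mem_support) (m := k - 1) (by omega)
    (hTcard.trans (Set.ncard_le_ncard Set.subset_union_left
      ((Set.finite_of_ncard_pos (by omega)).union (List.finite_toSet _))))
  have hiff : ∀ G ∈ 𝓕, G.Adj x y ↔ insert y B ∈ C := fun G hG => by
    rw [← hG.2.2]
    exact adj_iff_insert_mem_connSets (by omega) hxB (fun h => hyA (hBA h))
      (hB.induce_mono (sInf_le hG)) fun b hb hyb =>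
        by_contra fun hbx => hfar G hG b (hBA hb) hbx hyb
  exact (hiff G' hG').mpr ((hiff G hG).mp hxy)

lemma distToSet_sInf_le_of_le [DecidableEq V] (hk : 2 ≤ k)
    (hTconn : ((fromEdgeSet H.E).induce T).Connected) (hTcard : k - 1 ≤ T.ncard) (n : ℕ) :
    ∀ G ∈ 𝓕, ∀ x, distToSet G T x ≤ n → distToSet (sInf 𝓕) T x ≤ n := by
  induction n with
  | zero =>
    intro G hG x hx
    rw [Nat.cast_zero, nonpos_iff_eq_zero, distToSet_eq_zero_iff] at hx ⊢
    exact hx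
  | succ n ih =>
    intro G hG x hx
    obtain ⟨m, hm, hmn⟩ := ENat.le_natCast_iff.mp hx
    obtain hmn | rfl : m ≤ n ∨ m = n + 1 := by omega
    · exact (ih G hG x (hm ▸ by exact_mod_cast hmn)).trans (by exact_mod_cast n.le_succ)
    have hxT : x ∉ T := fun h => by
      rw [distToSet_eq_zero_iff.mpr h] at hm
      exact absurd hm (by norm_cast)
    obtain ⟨t, ht, _ | ⟨hxx', w⟩, hw⟩ := exists_walk_length_eq_of_distToSet_eq hm
    · simp at hw
    rename_i x'
    by_cases hx'T : x' ∈ T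
    · exact (distToSet_sInf_le_one hG ⟨hxT, x', hx'T, hxx'.symm⟩).trans (by simp)
    have hx' : distToSet G T x' ≤ n := by
      simpa [show w.length = n by simpa using hw] using distToSet_le_length ht w
    obtain ⟨d, hd, hdn⟩ := ENat.le_natCast_iff.mp (ih G hG x' hx')
    obtain ⟨t', ht', v, hv⟩ := exists_walk_length_eq_of_distToSet_eq hd
    have hfar : ∀ G' ∈ 𝓕, (v.length : ℕ∞) < distToSet G' T x := by
      intro G' hG'
      by_contra! h
      have := (distToSet_anti (sInf_le hG)).trans (ih G' hG' x (h.trans (by simp [hv, hdn])))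
      rw [hm] at this
      norm_cast at this
      omega
    have hv₁ : 1 ≤ v.length := by
      rw [hv, Nat.one_le_iff_ne_zero]
      rintro rfl
      exact hx'T (distToSet_eq_zero_iff.mp hd)
    have hKadj : (sInf 𝓕).Adj x' x := sInf_adj.mpr
      ⟨fun G' hG' => adj_of_adj_of_walk hk hTconn hTcard v ht' hv₁ hfar hG hG' hxx'.symm,
        hxx'.ne.symm⟩
    calc distToSet (sInf 𝓕) T x ≤ distToSet (sInf 𝓕) T x' + 1 := distToSet_le_of_adj hKadj.symm
      _ ≤ (n + 1 : ℕ) := by rw [hd]; exact_mod_cast by omega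

lemma distToSet_sInf_consistentGraphs [DecidableEq V] (hk : 2 ≤ k)
    (hTconn : ((fromEdgeSet H.E).induce T).Connected) (hTcard : k - 1 ≤ T.ncard) (hG : G ∈ 𝓕) :
    distToSet (sInf 𝓕) T = distToSet G T := by
  ext x
  refine le_antisymm ?_ (distToSet_anti (sInf_le hG))
  cases h : distToSet G T x with
  | top => exact le_top
  | coe n => exact distToSet_sInf_le_of_le hk hTconn hTcard n G hG x h.le

lemma adj_of_adj_of_distToSet_lt [DecidableEq V] (hk : 2 ≤ k)
    (hTconn : ((fromEdgeSet H.E).induce T).Connected) (hTcard : k - 1 ≤ T.ncard) {i j : ℕ}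
    (hx : distToSet (sInf 𝓕) T x = i) (hy : distToSet (sInf 𝓕) T y = j) (hij : i < j)
    (h01 : ¬(i = 0 ∧ j = 1)) (hG : G ∈ 𝓕) (hG' : G' ∈ 𝓕) (hxy : G.Adj x y) : G'.Adj x y := by
  have hdist : ∀ G ∈ 𝓕, distToSet G T y = j := fun G hG =>
    (distToSet_sInf_consistentGraphs hk hTconn hTcard hG) ▸ hy
  obtain rfl | hi := Nat.eq_zero_or_pos i
  · have hxT := distToSet_eq_zero_iff.mp (hx.trans Nat.cast_zero)
    have := (hdist G hG) ▸ distToSet_le_of_adj (T := T) hxy.symm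
    rw [distToSet_eq_zero_iff.mpr hxT] at this
    norm_cast at this
    omega
  obtain ⟨t, ht, w, hw⟩ := exists_walk_length_eq_of_distToSet_eq hx
  exact adj_of_adj_of_walk hk hTconn hTcard w ht (hw ▸ hi)
    (fun G hG => hw ▸ hdist G hG ▸ by exact_mod_cast hij) hG hG' hxy

end consistentGraphs

open PartialGraph in
theorem stmt11_general {V : Type*} [Fintype V] [DecidableEq V] (k : ℕ) (hk : 2 ≤ k)
    (C : Set (Finset V))
    (H : PartialGraph V) (T : Set V)
    (hTconn : ((SimpleGraph.fromEdgeSet H.E).induce T).Connected)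
    (hTcard : k - 1 ≤ T.ncard)
    (G₀ : SimpleGraph V) (hG₀conn : G₀.Connected) (hG₀sup : H.Supergraph G₀)
    (hG₀N : setNbhd G₀ T = H.nbhd T) (hG₀C : connSets k G₀ = C) :
    ∃ (H' : PartialGraph V) (ℓ : ℕ) (L : ℕ → Set V),
      H.PartialSupergraph H' ∧
      L 0 = T ∧
      (∀ i ≤ ℓ, ∀ j ≤ ℓ, i ≠ j → Disjoint (L i) (L j)) ∧
      (⋃ i ∈ Finset.range (ℓ + 1), L i) = Set.univ ∧
      (∀ i j, i < j → j ≤ ℓ → ¬(i = 0 ∧ j = 1) →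
        ∀ x ∈ L i, ∀ y ∈ L j, s(x, y) ∉ H'.EU) ∧
      (∀ i ≤ ℓ, L i =
        {x | distToSet (SimpleGraph.fromEdgeSet H'.E) T x = (i : ℕ∞)}) ∧
      (∀ G : SimpleGraph V, H.Supergraph G → setNbhd G T = H.nbhd T →
        connSets k G = C → H'.Supergraph G) := by
  have hG₀ : G₀ ∈ consistentGraphs k C H T := ⟨hG₀sup, hG₀N, hG₀C⟩
  set K := sInf (consistentGraphs k C H T)
  refine ⟨ofFamily _ ⟨G₀, hG₀⟩, Fintype.card V, fun i => {x | distToSet K T x = i},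
    partialSupergraph_ofFamily _ fun G hG => hG.1, ?_, ?_, ?_,
    fun i j hij _ h01 x hx y hy => mk_notMem_EU_ofFamily _ fun G hG G' hG' =>
      adj_of_adj_of_distToSet_lt hk hTconn hTcard hx hy hij h01 hG hG',
    fun i _ => by simp [ofFamily, K], fun G h₁ h₂ h₃ => supergraph_ofFamily _ ⟨h₁, h₂, h₃⟩⟩
  · ext x
    simpa using distToSet_eq_zero_iff
  · exact fun i _ j _ hij =>
      Set.disjoint_left.mpr fun x hi hj => hij (by exact_mod_cast hi.symm.trans hj)
  · refine Set.eq_univ_of_forall fun x => Set.mem_iUnion₂.mpr ?_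
    have hlt : distToSet K T x < Fintype.card V :=
      distToSet_sInf_consistentGraphs hk hTconn hTcard hG₀ ▸
        distToSet_lt_card hG₀conn (Set.nonempty_coe_sort.mp hTconn.nonempty)
    obtain ⟨n, hn⟩ := ENat.ne_top_iff_exists.mp hlt.ne_top
    rw [← hn, Nat.cast_lt] at hlt
    exact ⟨n, Finset.mem_range.mpr (by omega), hn.symm⟩

theorem stmt11 {V : Type*} [Fintype V] [DecidableEq V] (k : ℕ) (hk : 2 ≤ k)
    (C : Set (Finset V)) (hC : ∀ S ∈ C, S.card = k)
    (H : PartialGraph V) (T : Set V)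
    (hTconn : ((SimpleGraph.fromEdgeSet H.E).induce T).Connected)
    (hTcard : k - 1 ≤ T.ncard)
    (hN : (H.nbhd T).Nonempty)
    (G₀ : SimpleGraph V) (hG₀conn : G₀.Connected) (hG₀sup : H.Supergraph G₀)
    (hG₀N : setNbhd G₀ T = H.nbhd T) (hG₀C : connSets k G₀ = C) :
    ∃ (H' : PartialGraph V) (ℓ : ℕ) (L : ℕ → Set V),
      H.PartialSupergraph H' ∧
      L 0 = T ∧
      (∀ i ≤ ℓ, ∀ j ≤ ℓ, i ≠ j → Disjoint (L i) (L j)) ∧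
      (⋃ i ∈ Finset.range (ℓ + 1), L i) = Set.univ ∧
      (∀ i j, i < j → j ≤ ℓ → ¬(i = 0 ∧ j = 1) →
        ∀ x ∈ L i, ∀ y ∈ L j, s(x, y) ∉ H'.EU) ∧
      (∀ i ≤ ℓ, L i =
        {x | distToSet (SimpleGraph.fromEdgeSet H'.E) T x = (i : ℕ∞)}) ∧
      (∀ G : SimpleGraph V, H.Supergraph G → setNbhd G T = H.nbhd T →
        connSets k G = C → H'.Supergraph G) :=
  stmt11_general k hk C H T hTconn hTcard G₀ hG₀conn hG₀sup hG₀N hG₀C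
end

section
/- Let k ≥ 2 be an integer and let G be a connected finite simple graph on a vertex set V with |V| > 2k − 2. If u, v are non-adjacent vertices of G that are fake neighbors with respect to k, then u and v have a common neighbor in G, i.e. N_G(u) ∩ N_G(v) ≠ ∅. -/
/-!
Suppose `u` and `v` have no common neighbour, so that their closed neighbourhoods `N[u]` and
`N[v]` are disjoint. Let `C_v` be the component of `v` in the graph spanned by the vertices
outside `N[u]`, and `C_u` symmetrically. Walking from any vertex towards `v`, the first vertex
of `N[u] ∪ N[v]` met lies in `C_u` or `C_v`, so `C_u ∪ C_v` covers the vertex set, and since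
`|V| ≥ 2k - 1` one of them, say `C_v`, has at least `k` vertices. Growing a connected `k`-set
`S ∋ v` inside `C_v`, vertex by vertex, gives a witness that `u, v` are clear non-neighbours:
`u` has no neighbour in `S`, so it is isolated in `(S \ {v'}) ∪ {u}`.
-/

namespace SimpleGraph

variable {V : Type*} (G : SimpleGraph V)

def closedNbhd (u : V) : Set V := insert u (G.neighborSet u)

def restrict (s : Set V) : SimpleGraph V where
  Adj x y := G.Adj x y ∧ x ∈ s ∧ y ∈ s
  symm := ⟨fun _ _ h => ⟨h.1.symm, h.2.2, h.2.1⟩⟩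
  loopless := ⟨fun x h => G.loopless.irrefl x h.1⟩

def farComponent (u v : V) : Set V := {x | (G.restrict (G.closedNbhd u)ᶜ).Reachable v x}

variable {G}

lemma restrict_le (s : Set V) : G.restrict s ≤ G := fun _ _ h => h.1

lemma Reachable.mem_of_restrict {s : Set V} {v x : V} (h : (G.restrict s).Reachable v x)
    (hv : v ∈ s) : x ∈ s := by
  obtain ⟨p⟩ := h.symm
  cases p with
  | nil => exact hv
  | cons hadj _ => exact hadj.2.1

lemma reachable_of_connected_induce {S : Set V} (hS : (G.induce S).Connected) {v x : V}
    (hv : v ∈ S) (hx : x ∈ S) : G.Reachable v x :=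
  (hS.preconnected ⟨v, hv⟩ ⟨x, hx⟩).map (Embedding.induce S).toHom

lemma not_connected_induce_insert {s : Set V} {u : V} (hs : s.Nonempty) (hu : u ∉ s)
    (hnadj : ∀ w ∈ s, ¬ G.Adj u w) : ¬ (G.induce (insert u s)).Connected := by
  intro hconn
  obtain ⟨w, hw⟩ := hs
  have : Nontrivial (insert u s : Set V) :=
    ⟨⟨⟨u, Set.mem_insert u s⟩, ⟨w, Set.mem_insert_of_mem u hw⟩,
      fun h => hu (Subtype.mk.inj h ▸ hw)⟩⟩
  obtain ⟨⟨y, hy⟩, hadj⟩ := hconn.preconnected.exists_adj_of_nontrivial ⟨u, Set.mem_insert u s⟩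
  rcases hy with rfl | hy
  · exact G.loopless.irrefl _ hadj
  · exact hnadj y hy hadj

lemma exists_connected_induce_card_eq [DecidableEq V] (v : V) {k : ℕ} (hk : 1 ≤ k)
    (hkC : k ≤ {x | G.Reachable v x}.ncard) :
    ∃ S : Finset V, S.card = k ∧ v ∈ S ∧ (G.induce (S : Set V)).Connected := by
  induction k, hk using Nat.le_induction with
  | base =>
    refine ⟨{v}, Finset.card_singleton v, Finset.mem_singleton_self v, ?_⟩
    rw [Finset.coe_singleton, induce_singleton_eq_top]
    exact connected_top
  | succ k _ ih =>
    obtain ⟨S, hS, hvS, hSconn⟩ := ih (by omega)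
    obtain ⟨w, hw, hwS⟩ : ∃ w, G.Reachable v w ∧ w ∉ S := by
      by_contra! hCS
      have := Set.ncard_le_ncard (s := {x | G.Reachable v x}) (fun x hx => hCS x hx) S.finite_toSet
      rw [Set.ncard_coe_finset] at this
      omega
    obtain ⟨p⟩ := hw
    obtain ⟨d, -, hdS, hdS'⟩ := p.exists_boundary_dart S hvS hwS
    refine ⟨insert d.snd S, by rw [Finset.card_insert_of_notMem hdS', hS],
      Finset.mem_insert_of_mem hvS, ?_⟩
    rw [Finset.coe_insert, Set.insert_eq, Set.union_comm]
    refine connected_induce_union hSconn.preconnected ?_ hdS rfl d.adj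
    rw [induce_singleton_eq_top]
    exact connected_top.preconnected

lemma farComponent_subset_compl {u v : V} (hv : v ∉ G.closedNbhd u) :
    G.farComponent u v ⊆ (G.closedNbhd u)ᶜ :=
  fun _ hx => Reachable.mem_of_restrict hx hv

lemma closedNbhd_subset_farComponent {u v : V}
    (huv : Disjoint (G.closedNbhd u) (G.closedNbhd v)) :
    G.closedNbhd v ⊆ G.farComponent u v := by
  have hv : v ∉ G.closedNbhd u := huv.notMem_of_mem_right (Set.mem_insert v _)
  rintro x (rfl | hx)
  · exact Reachable.refl _
  · exact Adj.reachable ⟨hx, hv, huv.notMem_of_mem_right (Set.mem_insert_of_mem v hx)⟩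

lemma mem_farComponent_of_adj {u v x y : V} (hv : v ∉ G.closedNbhd u)
    (hx : x ∉ G.closedNbhd u) (hy : y ∈ G.farComponent u v) (hxy : G.Adj x y) :
    x ∈ G.farComponent u v :=
  Reachable.trans hy (Adj.reachable ⟨hxy.symm, farComponent_subset_compl hv hy, hx⟩)

lemma adj_mem_farComponent_union {u v x y : V}
    (huv : Disjoint (G.closedNbhd u) (G.closedNbhd v)) (hxy : G.Adj x y)
    (hy : y ∈ G.farComponent u v ∪ G.farComponent v u) :
    x ∈ G.farComponent u v ∪ G.farComponent v u := by
  by_cases hxu : x ∈ G.closedNbhd u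
  · exact Or.inr (closedNbhd_subset_farComponent huv.symm hxu)
  by_cases hxv : x ∈ G.closedNbhd v
  · exact Or.inl (closedNbhd_subset_farComponent huv hxv)
  have hv : v ∉ G.closedNbhd u := huv.notMem_of_mem_right (Set.mem_insert v _)
  have hu : u ∉ G.closedNbhd v := huv.notMem_of_mem_left (Set.mem_insert u _)
  rcases hy with hy | hy
  · exact Or.inl (mem_farComponent_of_adj hv hxu hy hxy)
  · exact Or.inr (mem_farComponent_of_adj hu hxv hy hxy)

lemma farComponent_union_eq_univ (hG : G.Preconnected) {u v : V}
    (huv : Disjoint (G.closedNbhd u) (G.closedNbhd v)) :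
    G.farComponent u v ∪ G.farComponent v u = Set.univ := by
  refine Set.eq_univ_of_forall fun x => ?_
  suffices ∀ {x y : V}, G.Walk x y → y ∈ G.farComponent u v ∪ G.farComponent v u →
      x ∈ G.farComponent u v ∪ G.farComponent v u from
    this (hG x v).some (Or.inl (Reachable.refl v))
  intro x y p
  induction p with
  | nil => exact id
  | cons hxy _ ih => exact fun hy => adj_mem_farComponent_union huv hxy (ih hy)

lemma disjoint_closedNbhd {u v : V} (huv : u ≠ v) (hnadj : ¬ G.Adj u v)
    (hcommon : ¬ (G.neighborSet u ∩ G.neighborSet v).Nonempty) :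
    Disjoint (G.closedNbhd u) (G.closedNbhd v) := by
  rw [Set.disjoint_left]
  rintro x (rfl | hux) (rfl | hvx)
  · exact huv rfl
  · exact hnadj hvx.symm
  · exact hnadj hux
  · exact hcommon ⟨x, hux, hvx⟩

lemma oneSideClear_of_le_ncard_farComponent [DecidableEq V] {k : ℕ} (hk : 2 ≤ k) {u v : V}
    (hv : v ∉ G.closedNbhd u) (hC : k ≤ (G.farComponent u v).ncard) :
    OneSideClear k G u v := by
  obtain ⟨S, hS, hvS, hSconn⟩ := exists_connected_induce_card_eq v (by omega) hC
  have hSfar : ∀ x ∈ S, x ∉ G.closedNbhd u := fun x hx =>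
    farComponent_subset_compl hv (reachable_of_connected_induce hSconn hvS hx)
  refine ⟨S, hS, hSconn.mono (comap_monotone _ (restrict_le _)), hvS,
    fun hu => hSfar u hu (Set.mem_insert u _), fun v' _ => ?_⟩
  rw [Finset.coe_insert]
  refine not_connected_induce_insert ?_ ?_ ?_
  · rw [Finset.coe_nonempty, ← Finset.card_pos,
      Finset.card_erase_of_mem (Finset.mem_of_mem_erase ‹_›), hS]
    omega
  · exact fun hu => hSfar u (Finset.mem_of_mem_erase hu) (Set.mem_insert u _)
  · exact fun w hw hadj =>
      hSfar w (Finset.mem_of_mem_erase hw) (Set.mem_insert_of_mem u hadj)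

end SimpleGraph

open SimpleGraph in
theorem stmt13 {V : Type*} [Fintype V] [DecidableEq V] (k : ℕ) (hk : 2 ≤ k)
    (G : SimpleGraph V) (hconn : G.Connected)
    (hcard : 2 * k - 2 < Fintype.card V)
    (u v : V) (huv : u ≠ v) (hnadj : ¬ G.Adj u v)
    (hfake : ¬ ClearNonNeighbors k G u v) :
    (G.neighborSet u ∩ G.neighborSet v).Nonempty := by
  by_contra hcommon
  have hdisj := disjoint_closedNbhd huv hnadj hcommon
  have hcover : Fintype.card V ≤ (G.farComponent u v).ncard + (G.farComponent v u).ncard := by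
    rw [← Nat.card_eq_fintype_card, ← Set.ncard_univ,
      ← farComponent_union_eq_univ hconn.preconnected hdisj]
    exact Set.ncard_union_le _ _
  apply hfake
  rcases (by omega : k ≤ (G.farComponent u v).ncard ∨ k ≤ (G.farComponent v u).ncard)
    with hC | hC
  · exact Or.inl (oneSideClear_of_le_ncard_farComponent hk
      (hdisj.notMem_of_mem_right (Set.mem_insert v _)) hC)
  · exact Or.inr (oneSideClear_of_le_ncard_farComponent hk
      (hdisj.notMem_of_mem_left (Set.mem_insert u _)) hC)
end

section
/- Let k ≥ 3 be an integer and let G be a finite simple graph with two distinct vertices u, v that are twins, i.e. N_G(u) \ {v} = N_G(v) \ {u}. Then the graph obtained from G by adding the edge uv and the graph obtained from G by deleting the edge uv have the same connected k-sets: S_k(G + uv) = S_k(G − uv). -/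
/-!
Adding or deleting `uv` can only change `S_k` at sets `S ∋ u, v`, and there the edge `uv` is
redundant as soon as `u` and `v` have a common neighbour in `S`. If `|S| ≥ 3` and `G[S] + uv`
is connected, some vertex of `S \ {u, v}` is adjacent to `u` or to `v`, hence, the two being
twins, to both.
-/

namespace SimpleGraph

variable {V : Type*}

lemma Connected.of_adj_reachable {G H : SimpleGraph V} (hG : G.Connected)
    (h : ∀ ⦃a b⦄, G.Adj a b → H.Reachable a b) : H.Connected := by
  have := hG.nonempty
  refine Connected.mk fun a b => ?_
  obtain ⟨p⟩ := hG.preconnected a b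
  induction p with
  | nil => rfl
  | cons hadj _ ih => exact (h hadj).trans ih

lemma Connected.exists_adj_of_induce {G : SimpleGraph V} {S T : Set V}
    (hS : (G.induce S).Connected) {a b : V} (ha : a ∈ S) (hb : b ∈ S) (haT : a ∈ T)
    (hbT : b ∉ T) : ∃ x ∈ S, ∃ y ∈ S, x ∈ T ∧ y ∉ T ∧ G.Adj x y := by
  obtain ⟨p⟩ := hS.preconnected ⟨a, ha⟩ ⟨b, hb⟩
  obtain ⟨d, -, hx, hy⟩ := p.exists_boundary_dart {x | x.1 ∈ T} haT hbT
  exact ⟨d.fst, d.fst.2, d.snd, d.snd.2, hx, hy, d.adj⟩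

lemma adj_iff_adj_of_neighborSet_sdiff_eq {G : SimpleGraph V} {u v w : V}
    (htwin : G.neighborSet u \ {v} = G.neighborSet v \ {u}) (hwu : w ≠ u) (hwv : w ≠ v) :
    G.Adj u w ↔ G.Adj v w := by
  simpa [hwu, hwv] using congrArg (w ∈ ·) htwin

lemma exists_common_adj_of_neighborSet_sdiff_eq {G : SimpleGraph V} {u v : V}
    (htwin : G.neighborSet u \ {v} = G.neighborSet v \ {u}) {S : Finset V} (hS : 3 ≤ S.card)
    (hu : u ∈ S) (hv : v ∈ S) (hconn : ((G ⊔ edge u v).induce (S : Set V)).Connected) :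
    ∃ w ∈ S, w ≠ u ∧ w ≠ v ∧ G.Adj u w ∧ G.Adj v w := by
  classical
  obtain ⟨w₀, hw₀S, hw₀uv⟩ : ∃ w₀ ∈ S, w₀ ∉ ({u, v} : Finset V) :=
    Finset.exists_mem_notMem_of_card_lt_card ((Finset.card_le_two).trans_lt hS)
  obtain ⟨x, -, y, hyS, hx, hy, hxy⟩ :=
    hconn.exists_adj_of_induce (T := {u, v}) hu hw₀S (by simp) (by simpa using hw₀uv)
  simp only [Set.mem_insert_iff, Set.mem_singleton_iff, not_or] at hx hy
  obtain ⟨hyu, hyv⟩ := hy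
  have hGxy : G.Adj x y := by simpa [edge_adj, hyu, hyv] using hxy
  have twin := adj_iff_adj_of_neighborSet_sdiff_eq htwin hyu hyv
  refine ⟨y, hyS, hyu, hyv, ?_⟩
  rcases hx with rfl | rfl
  exacts [⟨hGxy, twin.1 hGxy⟩, ⟨twin.2 hGxy, hGxy⟩]

lemma Connected.induce_deleteEdges_of_sup_edge {G : SimpleGraph V} {u v : V} {S : Set V}
    (hS : ((G ⊔ edge u v).induce S).Connected)
    (hw : u ∈ S → v ∈ S → ∃ w ∈ S, w ≠ u ∧ w ≠ v ∧ G.Adj u w ∧ G.Adj v w) :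
    ((G.deleteEdges {s(u, v)}).induce S).Connected := by
  have huv (hu : u ∈ S) (hv : v ∈ S) :
      ((G.deleteEdges {s(u, v)}).induce S).Reachable ⟨u, hu⟩ ⟨v, hv⟩ := by
    obtain ⟨w, hwS, hwu, hwv, huw, hvw⟩ := hw hu hv
    exact (Adj.reachable (v := ⟨w, hwS⟩) (by simp [huw, hwu, hwv])).trans
      (Adj.reachable (by simp [hvw.symm, hwu, hwv]))
  refine hS.of_adj_reachable fun ⟨x, hx⟩ ⟨y, hy⟩ hxy => ?_
  by_cases he : s(x, y) = s(u, v)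
  · rcases Sym2.eq_iff.1 he with ⟨rfl, rfl⟩ | ⟨rfl, rfl⟩
    exacts [huv hx hy, (huv hy hx).symm]
  · exact Adj.reachable (by simpa [adj_edge, he, Ne.symm he] using hxy)

end SimpleGraph

open SimpleGraph in
theorem stmt15_general {V : Type*} (k : ℕ) (hk : 3 ≤ k)
    (G : SimpleGraph V) (u v : V)
    (htwin : G.neighborSet u \ {v} = G.neighborSet v \ {u}) :
    connSets k (G ⊔ SimpleGraph.fromEdgeSet {s(u, v)}) =
      connSets k (G.deleteEdges {s(u, v)}) := by
  ext S
  refine and_congr_right fun hcard => ⟨fun hconn => ?_,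
    Connected.mono (comap_monotone _ ((deleteEdges_le _).trans le_sup_left))⟩
  exact hconn.induce_deleteEdges_of_sup_edge fun hu hv =>
    exists_common_adj_of_neighborSet_sdiff_eq htwin (hcard ▸ hk) hu hv hconn

theorem stmt15 {V : Type*} [Fintype V] [DecidableEq V] (k : ℕ) (hk : 3 ≤ k)
    (G : SimpleGraph V) (u v : V) (huv : u ≠ v)
    (htwin : G.neighborSet u \ {v} = G.neighborSet v \ {u}) :
    connSets k (G ⊔ SimpleGraph.fromEdgeSet {s(u, v)}) =
      connSets k (G.deleteEdges {s(u, v)}) :=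
  stmt15_general k hk G u v htwin
end
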